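/- arXiv:2604.09176 — 8 statements merged into one kernel-verified Lean document; each statement's English description precedes it below -/
import Mathlib

section
/- A multigraph with maximum degree Δ ≥ 3 has at most (e(Δ-1))^n connected induced subgraphs with n+1 vertices that include a given fixed vertex. -/
/-!
Explore a connected set `S ∋ v` from `v`, keeping a frontier `F` of candidate vertices that are
adjacent to the explored set `X`. The first frontier vertex is either rejected, or accepted, in
which case its neighbours outside `X` join the frontier; since it already has a neighbour in `X`,
at most `Δ - 1` of them are new. Counting the sets produced by this recursion with Pascal's rule
gives at most `C(Δ + (Δ - 1) n, n)` sets, and with `d = Δ - 1 ≥ 2` one has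
`C(d + 1 + d n, n) ≤ (d (n + 3/2))^n / n! ≤ (e d)^n`, the last step being `(n + 3/2)^n ≤ e^n n!`,
proved by induction from `exp y ≥ 1 + y + y^2/2`.
-/

open Real Finset
open scoped Nat

lemma add_five_halves_le_mul_exp (n : ℕ) :
    (n + 5 / 2 : ℝ) ≤ (n + 1) * exp (3 / (2 * n + 3)) := by
  calc (n + 5 / 2 : ℝ) ≤ (n + 1) * (1 + 3 / (2 * n + 3) + (3 / (2 * n + 3)) ^ 2 / 2) := by
        rw [← sub_nonneg]
        field_simp
        ring_nf
        positivity
    _ ≤ (n + 1) * exp (3 / (2 * n + 3)) := by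
        gcongr
        exact quadratic_le_exp_of_nonneg (by positivity)

lemma add_three_halves_pow_le (n : ℕ) : ((n : ℝ) + 3 / 2) ^ n ≤ exp 1 ^ n * n ! := by
  induction n with
  | zero => simp
  | succ n ih =>
    have hratio : ((n : ℝ) + 5 / 2) ^ n ≤ ((n : ℝ) + 3 / 2) ^ n * exp (n / (n + 3 / 2)) := by
      calc ((n : ℝ) + 5 / 2) ^ n = ((n + 3 / 2) * (1 + 1 / (n + 3 / 2))) ^ n := by
            congr 1; field_simp; ring
        _ ≤ ((n + 3 / 2) * exp (1 / (n + 3 / 2))) ^ n := by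
            gcongr
            linarith [add_one_le_exp (1 / ((n : ℝ) + 3 / 2))]
        _ = ((n : ℝ) + 3 / 2) ^ n * exp (n / (n + 3 / 2)) := by
            rw [mul_pow, ← exp_nat_mul]; congr 2; field_simp
    have hexp : exp 1 = exp (n / (n + 3 / 2)) * exp (3 / (2 * n + 3)) := by
      rw [← exp_add]; congr 1; field_simp
    calc ((n + 1 : ℕ) + 3 / 2 : ℝ) ^ (n + 1) = ((n : ℝ) + 5 / 2) ^ n * (n + 5 / 2) := by
          push_cast; ring
      _ ≤ ((n : ℝ) + 3 / 2) ^ n * exp (n / (n + 3 / 2)) *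
            ((n + 1) * exp (3 / (2 * n + 3))) := by
          gcongr
          exact add_five_halves_le_mul_exp n
      _ = ((n : ℝ) + 3 / 2) ^ n * (exp 1 * (n + 1)) := by rw [hexp]; ring
      _ ≤ exp 1 ^ n * n ! * (exp 1 * (n + 1)) := by gcongr
      _ = exp 1 ^ (n + 1) * (n + 1) ! := by push_cast [Nat.factorial_succ]; ring

lemma choose_le_exp_mul_pow {d : ℕ} (hd : 2 ≤ d) (n : ℕ) :
    ((d + 1 + d * n).choose n : ℝ) ≤ (exp 1 * d) ^ n := by
  have hd' : (2 : ℝ) ≤ d := by exact_mod_cast hd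
  calc ((d + 1 + d * n).choose n : ℝ) ≤ ((d + 1 + d * n : ℕ) : ℝ) ^ n / n ! :=
        Nat.choose_le_pow_div n _
    _ ≤ (d * (n + 3 / 2) : ℝ) ^ n / n ! := by
        gcongr; push_cast; nlinarith
    _ = d ^ n * (n + 3 / 2 : ℝ) ^ n / n ! := by rw [mul_pow]
    _ ≤ d ^ n * (exp 1 ^ n * n !) / n ! := by gcongr; exact add_three_halves_pow_le n
    _ = (exp 1 * d) ^ n := by field_simp; ring

namespace SimpleGraph

variable {V : Type*} (G : SimpleGraph V)

/-- Every connected component of `G[T]` meets `F`, stated without components: every nonempty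
subset of `T` closed under adjacency within `T` meets `F`. -/
def IsRootedAt (T F : Finset V) : Prop :=
  ∀ U ⊆ T, U.Nonempty → (∀ a ∈ U, ∀ b ∈ T, G.Adj a b → b ∈ U) → ∃ f ∈ F, f ∈ U

variable {G}

theorem Connected.isRootedAt_singleton {S : Finset V} {v : V}
    (hconn : (G.induce (S : Set V)).Connected) (hv : v ∈ S) : G.IsRootedAt S {v} := by
  intro U hUS ⟨u, hu⟩ hcl
  have hwalk : ∀ x y : (S : Set V), (G.induce (S : Set V)).Walk x y →
      (x : V) ∈ U → (y : V) ∈ U := by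
    intro x y p
    induction p with
    | nil => exact id
    | cons hadj _ ih => exact fun hx => ih (hcl _ hx _ (mem_coe.mp (Subtype.prop _)) hadj)
  obtain ⟨p⟩ := hconn.preconnected ⟨u, hUS hu⟩ ⟨v, hv⟩
  exact ⟨v, mem_singleton_self v, hwalk _ _ p hu⟩

theorem IsRootedAt.eq_empty {T : Finset V} (h : G.IsRootedAt T ∅) : T = ∅ := by
  by_contra hT
  obtain ⟨f, hf, -⟩ := h T Subset.rfl (nonempty_iff_ne_empty.mpr hT) fun _ _ b hb _ => hb
  exact notMem_empty f hf

variable [DecidableEq V]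

theorem IsRootedAt.sdiff_of_disjoint {T F X : Finset V} (h : G.IsRootedAt T F)
    (hT : Disjoint T X) : G.IsRootedAt T (F \ X) := fun U hU hne hcl =>
  let ⟨f, hf, hfU⟩ := h U hU hne hcl
  ⟨f, mem_sdiff.mpr ⟨hf, Finset.disjoint_left.mp hT (hU hfU)⟩, hfU⟩

theorem IsRootedAt.erase_of_notMem {T F : Finset V} {w : V} (h : G.IsRootedAt T F)
    (hw : w ∉ T) : G.IsRootedAt T (F.erase w) := fun U hU hne hcl =>
  let ⟨f, hf, hfU⟩ := h U hU hne hcl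
  ⟨f, mem_erase.mpr ⟨fun hfw => hw (hfw ▸ hU hfU), hf⟩, hfU⟩

variable [Fintype V]

variable (G) in
open Classical in
noncomputable def rootedSets (F X : Finset V) (k : ℕ) : Finset (Finset V) :=
  (powersetCard k univ).filter fun T => Disjoint T X ∧ G.IsRootedAt T F

theorem mem_rootedSets {F X T : Finset V} {k : ℕ} :
    T ∈ G.rootedSets F X k ↔ #T = k ∧ Disjoint T X ∧ G.IsRootedAt T F := by
  classical
  simp [rootedSets]

theorem card_rootedSets_zero_le (F X : Finset V) : #(G.rootedSets F X 0) ≤ 1 :=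
  calc #(G.rootedSets F X 0) ≤ #(powersetCard 0 (univ : Finset V)) := by
        classical
        exact card_filter_le _ _
    _ = 1 := by simp

variable [DecidableRel G.Adj]

/-- Removing `w` from `T` splits the component of `w` into pieces that each contain a
neighbour of `w`. -/
theorem IsRootedAt.erase {T F : Finset V} {w : V} (h : G.IsRootedAt T F) (hw : w ∈ T) :
    G.IsRootedAt (T.erase w) (F.erase w ∪ G.neighborFinset w) := by
  intro U hU hne hcl
  by_contra! hUF
  have hcl' : ∀ a ∈ U, ∀ b ∈ T, G.Adj a b → b ∈ U := by
    intro a ha b hb hab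
    have hbw : b ≠ w := by
      rintro rfl
      exact hUF a (mem_union_right _ ((mem_neighborFinset G b a).mpr hab.symm)) ha
    exact hcl a ha b (mem_erase.mpr ⟨hbw, hb⟩) hab
  obtain ⟨f, hf, hfU⟩ := h U (hU.trans (erase_subset w T)) hne hcl'
  have hfw : f ≠ w := ne_of_mem_erase (hU hfU)
  exact hUF f (mem_union_left _ (mem_erase.mpr ⟨hfw, hf⟩)) hfU

theorem card_rootedSets_succ_le {F X : Finset V} {w : V} (k : ℕ) :
    #(G.rootedSets F X (k + 1)) ≤ #(G.rootedSets (F.erase w) (insert w X) (k + 1)) +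
      #(G.rootedSets ((F.erase w ∪ G.neighborFinset w) \ insert w X) (insert w X) k) := by
  rw [← card_filter_add_card_filter_not (fun T => w ∈ T), add_comm]
  refine add_le_add (card_le_card fun T hT => ?_) ?_
  · obtain ⟨hT, hwT⟩ := mem_filter.mp hT
    obtain ⟨hcard, hX, hroot⟩ := mem_rootedSets.mp hT
    exact mem_rootedSets.mpr ⟨hcard, disjoint_insert_right.mpr ⟨hwT, hX⟩,
      hroot.erase_of_notMem hwT⟩
  · refine card_le_card_of_injOn (fun T : Finset V => T.erase w) (fun T hT => ?_)
      ((erase_injOn' w).mono fun T hT => (mem_filter.mp (mem_coe.mp hT)).2)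
    obtain ⟨hT, hwT⟩ := mem_filter.mp (mem_coe.mp hT)
    obtain ⟨hcard, hX, hroot⟩ := mem_rootedSets.mp hT
    have hX' : Disjoint (T.erase w) (insert w X) :=
      disjoint_insert_right.mpr ⟨notMem_erase w T, disjoint_of_subset_left (erase_subset w T) hX⟩
    exact mem_rootedSets.mpr ⟨by rw [card_erase_of_mem hwT, hcard, Nat.add_sub_cancel], hX',
      (hroot.erase hwT).sdiff_of_disjoint hX'⟩

theorem card_erase_union_neighborFinset_sdiff_le {Δ : ℕ} (hdeg : ∀ w, G.degree w ≤ Δ)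
    {F X : Finset V} {w : V} (hw : w ∈ F) (hF : ∀ f ∈ F, ∃ x ∈ X, G.Adj f x) :
    #((F.erase w ∪ G.neighborFinset w) \ insert w X) ≤ #F - 1 + (Δ - 1) := by
  obtain ⟨x, hxX, hwx⟩ := hF w hw
  have hsub : (F.erase w ∪ G.neighborFinset w) \ insert w X ⊆
      F.erase w ∪ (G.neighborFinset w).erase x := by
    intro f hf
    simp only [mem_sdiff, mem_union, mem_insert, not_or] at hf
    rcases hf with ⟨hf | hf, -, hfX⟩
    · exact mem_union_left _ hf
    · exact mem_union_right _ (mem_erase.mpr ⟨fun hfx => hfX (hfx ▸ hxX), hf⟩)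
  calc #((F.erase w ∪ G.neighborFinset w) \ insert w X)
      ≤ #(F.erase w) + #((G.neighborFinset w).erase x) :=
        (card_le_card hsub).trans (card_union_le _ _)
    _ ≤ #F - 1 + (Δ - 1) := by
        rw [card_erase_of_mem hw,
          card_erase_of_mem ((mem_neighborFinset G w x).mpr hwx), card_neighborFinset_eq_degree]
        have := hdeg w
        omega

theorem forall_exists_adj_erase_union_neighborFinset_sdiff {F X : Finset V} {w : V}
    (hF : ∀ f ∈ F, ∃ x ∈ X, G.Adj f x) :
    ∀ f ∈ (F.erase w ∪ G.neighborFinset w) \ insert w X, ∃ x ∈ insert w X, G.Adj f x := by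
  intro f hf
  rcases (mem_union.mp (mem_sdiff.mp hf).1) with hf | hf
  · obtain ⟨x, hxX, hfx⟩ := hF f (mem_of_mem_erase hf)
    exact ⟨x, mem_insert_of_mem hxX, hfx⟩
  · exact ⟨w, mem_insert_self w X, ((mem_neighborFinset G w f).mp hf).symm⟩

theorem card_rootedSets_le {Δ : ℕ} (hdeg : ∀ w, G.degree w ≤ Δ) (k : ℕ) :
    ∀ F X : Finset V, (∀ f ∈ F, ∃ x ∈ X, G.Adj f x) →
      #(G.rootedSets F X k) ≤ (#F + (Δ - 1) * k).choose k := by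
  induction k with
  | zero => intro F X _; simpa using card_rootedSets_zero_le F X
  | succ k ihk =>
    intro F
    induction F using Finset.strongInduction with
    | H F ihF =>
    intro X hF
    rcases F.eq_empty_or_nonempty with rfl | ⟨w, hw⟩
    · refine (card_eq_zero.mpr (eq_empty_of_forall_notMem fun T hT => ?_)).trans_le
        (Nat.zero_le _)
      obtain ⟨hcard, -, hroot⟩ := mem_rootedSets.mp hT
      simp [hroot.eq_empty] at hcard
    have hF'card := card_erase_union_neighborFinset_sdiff_le hdeg hw hF
    have hF' := forall_exists_adj_erase_union_neighborFinset_sdiff (w := w) hF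
    set F' := (F.erase w ∪ G.neighborFinset w) \ insert w X
    have hFw : ∀ f ∈ F.erase w, ∃ x ∈ insert w X, G.Adj f x := fun f hf =>
      let ⟨x, hxX, hfx⟩ := hF f (mem_of_mem_erase hf); ⟨x, mem_insert_of_mem hxX, hfx⟩
    have hFpos : 0 < #F := card_pos.mpr ⟨w, hw⟩
    calc #(G.rootedSets F X (k + 1))
        ≤ #(G.rootedSets (F.erase w) (insert w X) (k + 1)) +
            #(G.rootedSets F' (insert w X) k) := card_rootedSets_succ_le k
      _ ≤ (#(F.erase w) + (Δ - 1) * (k + 1)).choose (k + 1) + (#F' + (Δ - 1) * k).choose k :=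
          add_le_add (ihF _ (erase_ssubset hw) _ hFw) (ihk _ _ hF')
      _ ≤ (#F - 1 + (Δ - 1) * (k + 1)).choose (k + 1) + (#F - 1 + (Δ - 1) * (k + 1)).choose k := by
          rw [card_erase_of_mem hw]
          exact Nat.add_le_add_left (Nat.choose_le_choose k (by rw [Nat.mul_succ]; omega)) _
      _ = (#F + (Δ - 1) * (k + 1)).choose (k + 1) := by
          rw [add_comm, ← Nat.choose_succ_succ']
          congr 1
          omega

theorem natCard_connected_induce_le {Δ : ℕ} (hdeg : ∀ w, G.degree w ≤ Δ) (v : V) (n : ℕ) :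
    Nat.card {S : Finset V // S.card = n + 1 ∧ v ∈ S ∧ (G.induce (S : Set V)).Connected} ≤
      (Δ + (Δ - 1) * n).choose n := by
  classical
  calc Nat.card {S : Finset V // S.card = n + 1 ∧ v ∈ S ∧ (G.induce (S : Set V)).Connected}
      = #(univ.filter fun S : Finset V => S.card = n + 1 ∧ v ∈ S ∧
          (G.induce (S : Set V)).Connected) := by
        rw [Nat.card_eq_fintype_card, Fintype.card_subtype]
    _ ≤ #(G.rootedSets (G.neighborFinset v) {v} n) := by
        refine card_le_card_of_injOn (fun S : Finset V => S.erase v) (fun S hS => ?_)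
          ((erase_injOn' v).mono fun S hS => (mem_filter.mp (mem_coe.mp hS)).2.2.1)
        obtain ⟨-, hcard, hv, hconn⟩ := mem_filter.mp (mem_coe.mp hS)
        refine mem_rootedSets.mpr ⟨by rw [card_erase_of_mem hv, hcard, Nat.add_sub_cancel],
          disjoint_singleton_right.mpr (notMem_erase v S), ?_⟩
        simpa using (hconn.isRootedAt_singleton hv).erase hv
    _ ≤ (#(G.neighborFinset v) + (Δ - 1) * n).choose n :=
        card_rootedSets_le hdeg n _ _ fun f hf =>
          ⟨v, mem_singleton_self v, ((mem_neighborFinset G v f).mp hf).symm⟩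
    _ ≤ (Δ + (Δ - 1) * n).choose n :=
        Nat.choose_le_choose n (by rw [card_neighborFinset_eq_degree]; have := hdeg v; omega)

end SimpleGraph

/-- A (multi-)graph with maximum degree `Δ ≥ 3` has at most `(e(Δ-1))^n` connected
induced subgraphs with `n+1` vertices that include a given fixed vertex. -/
theorem stmt_0 {V : Type*} [Fintype V] [DecidableEq V]
    (G : SimpleGraph V) [DecidableRel G.Adj]
    (Δ : ℕ) (hΔ : 3 ≤ Δ) (hdeg : ∀ w : V, G.degree w ≤ Δ)
    (v : V) (n : ℕ) :
    (Nat.card {S : Finset V // S.card = n + 1 ∧ v ∈ S ∧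
        (G.induce (S : Set V)).Connected} : ℝ)
      ≤ (Real.exp 1 * ((Δ : ℝ) - 1)) ^ n := by
  obtain ⟨d, rfl⟩ : ∃ d, Δ = d + 1 := ⟨Δ - 1, by omega⟩
  calc (Nat.card {S : Finset V // S.card = n + 1 ∧ v ∈ S ∧
        (G.induce (S : Set V)).Connected} : ℝ)
      ≤ ((d + 1 + d * n).choose n : ℕ) := by
        exact_mod_cast G.natCard_connected_induce_le hdeg v n
    _ ≤ (exp 1 * d) ^ n := choose_le_exp_mul_pow (by omega) n
    _ = (exp 1 * (((d + 1 : ℕ) : ℝ) - 1)) ^ n := by push_cast; ring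
end

section
/- For c ∈ (0,1) and a multigraph K whose maximum degree is at most |V(K)|^c / 10, the number of partitions V₁ ⊔ ... ⊔ V_s = V(K) such that each part V_i induces a connected sub-multigraph is at most |V(K)|^{c·|V(K)|}. -/
/-! Encode a connected partition by a map `F : V → V` sending every vertex to itself or to a
neighbour: inside each part, step along a shortest path towards a chosen root of the part.
Iterating `F` `|V|` times sends every vertex to the root of its part, so the partition is the
set of fibres of `F^[|V|]` and `F` determines it. Hence there are at most `∏ v, (deg v + 1)`
connected partitions, and the degree bound makes each factor at most `|V|^c`, unless `K` has
no edges, in which case the product is `1`. -/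

open Function

theorem Set.EqOn.iterate_of_mapsTo {α : Type*} {f g : α → α} {s : Set α} (h : Set.EqOn f g s)
    (hg : Set.MapsTo g s s) : ∀ n, Set.EqOn f^[n] g^[n] s
  | 0 => fun _ _ => rfl
  | n + 1 => fun x hx => by
    rw [iterate_succ_apply, iterate_succ_apply, h hx]
    exact iterate_of_mapsTo h hg n (hg hx)

theorem Finset.exists_mem_of_sup_id_eq_univ {α : Type*} [Fintype α] [DecidableEq α]
    {P : Finset (Finset α)} (hP : P.sup id = Finset.univ) (a : α) : ∃ A ∈ P, a ∈ A := by
  simpa using Finset.mem_sup.1 (hP ▸ Finset.mem_univ a)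

namespace SimpleGraph

variable {V : Type*} {G : SimpleGraph V}

def IsParentMap (G : SimpleGraph V) (F : V → V) : Prop :=
  ∀ v, F v = v ∨ G.Adj v (F v)

theorem Reachable.exists_adj_dist_lt {u v : V} (hr : G.Reachable u v) (hne : u ≠ v) :
    ∃ w, G.Adj u w ∧ G.dist w v < G.dist u v := by
  obtain ⟨p, -, hp⟩ := hr.exists_path_of_dist
  cases p with
  | nil => exact absurd rfl hne
  | cons h q =>
    have := dist_le q
    rw [Walk.length_cons] at hp
    exact ⟨_, h, by omega⟩

theorem Connected.exists_iterate_eq_of_dist_le (hG : G.Connected) (r : V) :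
    ∃ g : V → V, G.IsParentMap g ∧ ∀ n a, G.dist a r ≤ n → g^[n] a = r := by
  classical
  choose! p hp using fun a (h : a ≠ r) => (hG a r).exists_adj_dist_lt h
  set g : V → V := fun a => if a = r then a else p a
  have hgr : g r = r := if_pos rfl
  refine ⟨g, fun a => ?_, fun n => ?_⟩
  · by_cases ha : a = r
    · exact .inl (if_pos ha)
    · exact .inr (by simpa [g, ha] using (hp a ha).1)
  induction n with
  | zero => exact fun a ha => hG.dist_eq_zero_iff.1 (Nat.le_zero.1 ha)
  | succ n ih =>
    intro a ha
    by_cases har : a = r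
    · subst har; exact iterate_fixed hgr _
    · have := (hp a har).2
      rw [iterate_succ_apply]
      exact ih _ (by simp only [g, if_neg har]; omega)

variable [Fintype V]

theorem exists_mapsTo_iterate_eq_of_induce_connected {A : Set V}
    (hA : (G.induce A).Connected) :
    ∃ f : V → V, ∃ r ∈ A, G.IsParentMap f ∧ Set.MapsTo f A A ∧
      ∀ v ∈ A, f^[Fintype.card V] v = r := by
  classical
  obtain ⟨r⟩ := hA.nonempty
  obtain ⟨g, hg_adj, hg_root⟩ := hA.exists_iterate_eq_of_dist_le r
  set f : V → V := fun v => if h : v ∈ A then g ⟨v, h⟩ else v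
  have hfg : Semiconj Subtype.val g f := fun a => by simp [f, a.2]
  refine ⟨f, r, r.2, fun v => ?_, fun v hv => ?_, fun v hv => ?_⟩
  · by_cases hv : v ∈ A
    · simpa [f, hv, Subtype.ext_iff] using hg_adj ⟨v, hv⟩
    · exact .inl (dif_neg hv)
  · simp [f, hv]
  · obtain ⟨p, hp, hlen⟩ := hA.exists_path_of_dist ⟨v, hv⟩ r
    have hdist : (G.induce A).dist ⟨v, hv⟩ r ≤ Fintype.card V :=
      hlen ▸ hp.length_lt.le.trans (Fintype.card_subtype_le _)
    rw [← (hfg.iterate_right _) ⟨v, hv⟩, hg_root _ _ hdist]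

section

variable [DecidableRel G.Adj]

theorem prod_degree_add_one_le_rpow {c : ℝ} (hc : 0 < c)
    (hΔ : ∀ v, (G.degree v : ℝ) ≤ (Fintype.card V : ℝ) ^ c / 10) :
    ∏ v, ((G.degree v : ℝ) + 1) ≤ (Fintype.card V : ℝ) ^ (c * Fintype.card V) := by
  by_cases hG : ∀ v, G.degree v = 0
  · simp only [hG, Nat.cast_zero, zero_add, Finset.prod_const_one]
    rcases (Fintype.card V).eq_zero_or_pos with h0 | hpos
    · simp [h0]
    · exact Real.one_le_rpow (by exact_mod_cast hpos) (by positivity)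
  obtain ⟨u, hu⟩ := not_forall.1 hG
  have h10 : 10 ≤ (Fintype.card V : ℝ) ^ c := by
    have : (1 : ℝ) ≤ G.degree u := by exact_mod_cast Nat.one_le_iff_ne_zero.2 hu
    linarith [hΔ u]
  calc ∏ v, ((G.degree v : ℝ) + 1) ≤ ∏ _v : V, (Fintype.card V : ℝ) ^ c :=
        Finset.prod_le_prod (fun v _ => by positivity) fun v _ => by linarith [hΔ v]
    _ = (Fintype.card V : ℝ) ^ (c * Fintype.card V) := by
        rw [Finset.prod_const, Finset.card_univ, Real.rpow_mul_natCast (by positivity)]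

end

variable [DecidableEq V]

def IsConnectedPartition (G : SimpleGraph V) (P : Finset (Finset V)) : Prop :=
  (∀ A ∈ P, A.Nonempty ∧ (G.induce (A : Set V)).Connected) ∧
    (∀ A ∈ P, ∀ B ∈ P, A ≠ B → Disjoint A B) ∧ P.sup id = Finset.univ

theorem IsConnectedPartition.pairwiseDisjoint {P : Finset (Finset V)}
    (hP : G.IsConnectedPartition P) : (P : Set (Finset V)).PairwiseDisjoint id :=
  fun A hA B hB => hP.2.1 A hA B hB

theorem IsConnectedPartition.exists_isParentMap_iterate_eq {P : Finset (Finset V)}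
    (hP : G.IsConnectedPartition P) :
    ∃ F : V → V, G.IsParentMap F ∧
      ∀ A ∈ P, ∃ r ∈ A, ∀ v ∈ A, F^[Fintype.card V] v = r := by
  choose f r hr hf_adj hf_maps hf_root using
    fun A : P => exists_mapsTo_iterate_eq_of_induce_connected (hP.1 A A.2).2
  choose part hpart hmem using Finset.exists_mem_of_sup_id_eq_univ hP.2.2
  refine ⟨fun v => f ⟨part v, hpart v⟩ v, fun v => hf_adj _ v,
    fun A hA => ⟨r ⟨A, hA⟩, hr _, fun v hv => ?_⟩⟩
  have hF : Set.EqOn (fun v => f ⟨part v, hpart v⟩ v) (f ⟨A, hA⟩) A := fun w hw => by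
    obtain rfl : part w = A := hP.pairwiseDisjoint.elim_finset (hpart w) hA w (hmem w) hw
    rfl
  rw [hF.iterate_of_mapsTo (hf_maps _) _ hv, hf_root _ v hv]

theorem IsConnectedPartition.eq_image_fiber {P : Finset (Finset V)}
    (hP : G.IsConnectedPartition P) {φ : V → V} (hφ : ∀ A ∈ P, ∃ r ∈ A, ∀ v ∈ A, φ v = r) :
    P = Finset.univ.image fun v => ({w | φ w = φ v} : Finset V) := by
  have hfiber : ∀ A ∈ P, ∀ v ∈ A, A = ({w | φ w = φ v} : Finset V) := by
    intro A hA v hv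
    obtain ⟨r, hrA, hr⟩ := hφ A hA
    ext w
    refine ⟨fun hw => by simp [hr w hw, hr v hv], fun hw => ?_⟩
    obtain ⟨B, hB, hwB⟩ := Finset.exists_mem_of_sup_id_eq_univ hP.2.2 w
    obtain ⟨s, hsB, hs⟩ := hφ B hB
    have : s = r := by simpa [hs w hwB, hr v hv] using hw
    rwa [← hP.pairwiseDisjoint.elim_finset hB hA s hsB (this ▸ hrA)]
  ext A
  simp only [Finset.mem_image, Finset.mem_univ, true_and]
  constructor
  · rintro hA
    obtain ⟨v, hv⟩ := (hP.1 A hA).1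
    exact ⟨v, (hfiber A hA v hv).symm⟩
  · rintro ⟨v, rfl⟩
    obtain ⟨B, hB, hvB⟩ := Finset.exists_mem_of_sup_id_eq_univ hP.2.2 v
    rwa [← hfiber B hB v hvB]

theorem card_isConnectedPartition_le_card_isParentMap :
    Nat.card {P // G.IsConnectedPartition P} ≤
      Nat.card {F : V → V // G.IsParentMap F} := by
  choose F hF_adj hF_root using
    fun P : {P // G.IsConnectedPartition P} => P.2.exists_isParentMap_iterate_eq
  refine Nat.card_le_card_of_injective (fun P => ⟨F P, hF_adj P⟩) fun P Q hPQ => ?_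
  have hFPQ : F P = F Q := congrArg Subtype.val hPQ
  apply Subtype.ext
  rw [P.2.eq_image_fiber (hF_root P), Q.2.eq_image_fiber (hF_root Q), hFPQ]

theorem card_isParentMap [DecidableRel G.Adj] :
    Nat.card {F : V → V // G.IsParentMap F} = ∏ v, (G.degree v + 1) := by
  unfold IsParentMap
  rw [Nat.card_congr (Equiv.subtypePiEquivPi (p := fun v w => w = v ∨ G.Adj v w)), Nat.card_pi]
  refine Finset.prod_congr rfl fun v _ => ?_
  rw [Nat.card_eq_fintype_card, Fintype.card_subtype, ← card_neighborFinset_eq_degree,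
    ← Finset.card_insert_of_notMem (G.notMem_neighborFinset_self v)]
  congr 1
  ext w
  simp [eq_comm]

end SimpleGraph

/-- For `c ∈ (0,1)` and a (multi-)graph `K` with maximum degree at most `|V(K)|^c / 10`,
the number of partitions of `V(K)` into parts inducing connected subgraphs is at most
`|V(K)|^(c·|V(K)|)`. -/
theorem stmt_1 {V : Type*} [Fintype V] [DecidableEq V]
    (K : SimpleGraph V) [DecidableRel K.Adj]
    (c : ℝ) (hc : c ∈ Set.Ioo (0:ℝ) 1)
    (hΔ : ∀ v : V, (K.degree v : ℝ) ≤ (Fintype.card V : ℝ) ^ c / 10) :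
    (Nat.card {P : Finset (Finset V) //
        (∀ A ∈ P, A.Nonempty ∧ (K.induce (A : Set V)).Connected) ∧
        (∀ A ∈ P, ∀ B ∈ P, A ≠ B → Disjoint A B) ∧
        P.sup id = Finset.univ} : ℝ)
      ≤ (Fintype.card V : ℝ) ^ (c * Fintype.card V) := by
  calc (Nat.card {P // K.IsConnectedPartition P} : ℝ)
      ≤ Nat.card {F : V → V // K.IsParentMap F} := by
        exact_mod_cast K.card_isConnectedPartition_le_card_isParentMap
    _ = ∏ v, ((K.degree v : ℝ) + 1) := by rw [K.card_isParentMap]; push_cast; rfl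
    _ ≤ _ := K.prod_degree_add_one_le_rpow hc.1 hΔ
end

section
/- If B_k denotes the maximum, over all multigraphs K with maximum degree Δ and k vertices, of the number of partitions of V(K) into parts inducing connected subgraphs, then B_k ≤ (10Δ)^k for every k ≥ 1. -/
open SimpleGraph

/-- In a connected graph on a finite vertex type, there is a "parent" function pointing
towards a fixed root `r`, such that iterating it enough times always reaches `r`. -/
lemma aux_parent {W : Type*} [Fintype W] (G : SimpleGraph W) (hG : G.Connected) (r : W) :
    ∃ p : W → Option W, (∀ v u, p v = some u → G.Adj v u) ∧
      ∀ (v : W) (n : ℕ), Fintype.card W ≤ n → (fun x => (p x).getD x)^[n] v = r := by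
  classical
  have hex : ∀ v : W, v ≠ r → ∃ u, G.Adj v u ∧ G.dist u r < G.dist v r := by
    intro v hv
    obtain ⟨w, hw⟩ := hG.exists_walk_length_eq_dist v r
    cases w with
    | nil => exact absurd rfl hv
    | @cons _ x _ h q =>
      refine ⟨x, h, ?_⟩
      have h1 : G.dist x r ≤ q.length := SimpleGraph.dist_le q
      simp only [SimpleGraph.Walk.length_cons] at hw
      omega
  let p : W → Option W := fun v => if h : v = r then none else some (hex v h).choose
  have hadj : ∀ v u, p v = some u → G.Adj v u := by
    intro v u h
    by_cases hv : v = r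
    · simp [p, hv] at h
    · simp only [p, dif_neg hv, Option.some_inj] at h
      exact h ▸ (hex v hv).choose_spec.1
  refine ⟨p, hadj, ?_⟩
  have hstep : ∀ (n : ℕ) (v : W), G.dist v r ≤ n → (fun x => (p x).getD x)^[n] v = r := by
    intro n
    induction n with
    | zero =>
      intro v hv
      simp only [Nat.le_zero] at hv
      simpa using hG.dist_eq_zero_iff.mp hv
    | succ n ih =>
      intro v hv
      by_cases h : v = r
      · rw [Function.iterate_succ_apply]
        have h0 : (p v).getD v = v := by simp [p, h]
        rw [h0]
        exact ih v (by simp [h, SimpleGraph.dist_self])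
      · rw [Function.iterate_succ_apply]
        have h0 : (p v).getD v = (hex v h).choose := by
          simp [p, dif_neg h]
        rw [h0]
        refine ih _ ?_
        have := (hex v h).choose_spec.2
        omega
  intro v n hn
  apply hstep
  obtain ⟨w⟩ := hG v r
  have h1 : G.dist v r ≤ (w.toPath : G.Walk v r).length := SimpleGraph.dist_le _
  have h2 : (w.toPath : G.Walk v r).length < Fintype.card W := w.toPath.prop.length_lt
  omega

/-- Version of `aux_parent` for the subgraph induced on a finset `A`. -/
lemma aux_parent_finset {V : Type*} [Fintype V] [DecidableEq V] (K : SimpleGraph V)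
    (A : Finset V) (hA : (K.induce (A : Set V)).Connected) {r : V} (hr : r ∈ A) :
    ∃ p : V → Option V, (∀ v u, p v = some u → K.Adj v u ∧ u ∈ A) ∧
      ∀ v ∈ A, ∀ n, Fintype.card V ≤ n → (fun x => (p x).getD x)^[n] v = r := by
  classical
  obtain ⟨p0, hadj0, hiter0⟩ := aux_parent _ hA ⟨r, Finset.mem_coe.mpr hr⟩
  let p : V → Option V := fun v =>
    if h : v ∈ A then Option.map Subtype.val (p0 ⟨v, Finset.mem_coe.mpr h⟩) else none
  have hadj : ∀ v u, p v = some u → K.Adj v u ∧ u ∈ A := by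
    intro v u h
    by_cases hv : v ∈ A
    · simp only [p, dif_pos hv] at h
      rcases h0 : p0 ⟨v, Finset.mem_coe.mpr hv⟩ with _ | u0
      · rw [h0] at h; simp at h
      · rw [h0] at h
        simp only [Option.map_some, Option.some_inj] at h
        have := hadj0 _ _ h0
        rw [SimpleGraph.comap_adj] at this
        subst h
        exact ⟨this, Finset.mem_coe.mp u0.2⟩
    · simp [p, dif_neg hv] at h
  have hcorr : ∀ (n : ℕ) (v : V) (h : v ∈ A),
      (fun x => (p x).getD x)^[n] v =
        ((fun x => ((p0 x).getD x))^[n] ⟨v, Finset.mem_coe.mpr h⟩ : (A : Set V)) := by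
    intro n
    induction n with
    | zero => intro v h; simp
    | succ n ih =>
      intro v h
      rw [Function.iterate_succ_apply, Function.iterate_succ_apply]
      set u0 := (p0 (⟨v, Finset.mem_coe.mpr h⟩ : (A : Set V))).getD ⟨v, Finset.mem_coe.mpr h⟩
        with hu0
      have hstep : (p v).getD v = (u0 : V) := by
        simp only [p, dif_pos h, hu0]
        rcases h0 : p0 ⟨v, Finset.mem_coe.mpr h⟩ with _ | w0 <;> simp [h0]
      rw [hstep]
      have hu0A : (u0 : V) ∈ A := Finset.mem_coe.mp u0.2
      rw [ih _ hu0A]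
  refine ⟨p, hadj, ?_⟩
  intro v hv n hn
  rw [hcorr n v hv]
  have hcard : Fintype.card (A : Set V) ≤ n := by
    have : Fintype.card (A : Set V) ≤ Fintype.card V :=
      Fintype.card_le_of_injective Subtype.val Subtype.val_injective
    omega
  have := hiter0 ⟨v, Finset.mem_coe.mpr hv⟩ n hcard
  rw [this]

/-- The iterated parent map. -/
noncomputable def plim {V : Type*} [Fintype V] (f : V → Option V) (v : V) : V :=
  (fun x => (f x).getD x)^[Fintype.card V] v

/-- Recovering a partition from a parent function. -/
noncomputable def precover {V : Type*} [Fintype V] [DecidableEq V] (f : V → Option V) :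
    Finset (Finset V) :=
  Finset.univ.image (fun v => Finset.univ.filter (fun w => plim f w = plim f v))

/-- Every partition into connected parts is coded by a parent function that follows edges. -/
lemma exists_code {V : Type*} [Fintype V] [DecidableEq V] [Nonempty V] (K : SimpleGraph V)
    (P : Finset (Finset V))
    (h1 : ∀ A ∈ P, A.Nonempty ∧ (K.induce (A : Set V)).Connected)
    (h2 : ∀ A ∈ P, ∀ B ∈ P, A ≠ B → Disjoint A B)
    (h3 : P.sup id = Finset.univ) :
    ∃ f : V → Option V, (∀ v u, f v = some u → K.Adj v u) ∧ precover f = P := by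
  classical
  have hpart : ∀ v : V, ∃ A, A ∈ P ∧ v ∈ A := by
    intro v
    have : v ∈ P.sup id := h3 ▸ Finset.mem_univ v
    simpa using Finset.mem_sup.mp this
  choose part hPmem hmem using hpart
  have huniq : ∀ v A, A ∈ P → v ∈ A → A = part v := by
    intro v A hA hv
    by_contra hne
    exact (Finset.disjoint_left.mp (h2 A hA _ (hPmem v) hne) hv) (hmem v)
  have hsame : ∀ v u, u ∈ part v → part u = part v := fun v u hu =>
    (huniq u _ (hPmem v) hu).symm
  let rt : Finset V → V := fun A => if h : A.Nonempty then h.choose else Classical.arbitrary V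
  have hrtmem : ∀ A : Finset V, A.Nonempty → rt A ∈ A := by
    intro A h
    simp only [rt, dif_pos h]
    exact h.choose_spec
  have hrtpart : ∀ v, rt (part v) ∈ part v := fun v => hrtmem _ ⟨v, hmem v⟩
  have key : ∀ A ∈ P, ∃ p : V → Option V, (∀ v u, p v = some u → K.Adj v u ∧ u ∈ A) ∧
      ∀ v ∈ A, ∀ n, Fintype.card V ≤ n → (fun x => (p x).getD x)^[n] v = rt A :=
    fun A hA => aux_parent_finset K A (h1 A hA).2 (hrtmem A (h1 A hA).1)
  let pf : Finset V → (V → Option V) := fun A =>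
    if h : A ∈ P then (key A h).choose else fun _ => none
  have pf_adj : ∀ A, A ∈ P → ∀ v u, pf A v = some u → K.Adj v u ∧ u ∈ A := by
    intro A hA
    simp only [pf, dif_pos hA]
    exact (key A hA).choose_spec.1
  have pf_iter : ∀ A, A ∈ P → ∀ v ∈ A, ∀ n, Fintype.card V ≤ n →
      (fun x => ((pf A x).getD x))^[n] v = rt A := by
    intro A hA
    simp only [pf, dif_pos hA]
    exact (key A hA).choose_spec.2
  set f : V → Option V := fun v => pf (part v) v with hf
  have fadj : ∀ v u, f v = some u → K.Adj v u := fun v u h => (pf_adj _ (hPmem v) v u h).1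
  have horb : ∀ (n : ℕ) (v : V),
      (fun x => (f x).getD x)^[n] v = (fun x => ((pf (part v) x).getD x))^[n] v := by
    intro n
    induction n with
    | zero => intro v; simp
    | succ n ih =>
      intro v
      rw [Function.iterate_succ_apply, Function.iterate_succ_apply]
      show (fun x => (f x).getD x)^[n] ((f v).getD v)
        = (fun x => ((pf (part v)) x).getD x)^[n] ((f v).getD v)
      set u := (f v).getD v with hu
      have hupart : u ∈ part v := by
        rcases h0 : f v with _ | w
        · have : u = v := by simp [hu, h0]
          rw [this]; exact hmem v
        · have h2' := (pf_adj _ (hPmem v) v w h0).2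
          have : u = w := by simp [hu, h0]
          rw [this]; exact h2'
      rw [ih u, hsame v u hupart]
  have hlim : ∀ v, plim f v = rt (part v) := by
    intro v
    rw [plim, horb, pf_iter _ (hPmem v) v (hmem v) _ le_rfl]
  refine ⟨f, fadj, ?_⟩
  have hfilter : ∀ v, Finset.univ.filter (fun w => plim f w = plim f v) = part v := by
    intro v
    ext w
    simp only [Finset.mem_filter, Finset.mem_univ, true_and, hlim]
    constructor
    · intro h
      have h2' : rt (part w) ∈ part v := h ▸ hrtpart v
      have hwv : part w = part v := by
        by_contra hne
        exact (Finset.disjoint_left.mp (h2 _ (hPmem w) _ (hPmem v) hne) (hrtpart w)) h2'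
      exact hwv ▸ hmem w
    · intro hw
      rw [hsame v w hw]
  rw [precover]
  ext A
  simp only [Finset.mem_image, Finset.mem_univ, true_and]
  constructor
  · rintro ⟨v, rfl⟩
    rw [hfilter v]
    exact hPmem v
  · intro hA
    obtain ⟨v, hv⟩ := (h1 A hA).1
    exact ⟨v, by rw [hfilter v, ← huniq v A hA hv]⟩

/-- If `B_k` is the maximum, over all (multi-)graphs `K` with maximum degree `Δ` and
`k` vertices, of the number of partitions of `V(K)` into parts inducing connected
subgraphs, then `B_k ≤ (10Δ)^k` for every `k ≥ 1`.  (Equivalently: every such graph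
has at most `(10Δ)^k` such partitions.) -/
theorem stmt_2 {V : Type*} [Fintype V] [DecidableEq V]
    (K : SimpleGraph V) [DecidableRel K.Adj]
    (Δ k : ℕ) (hΔ : 1 ≤ Δ) (hk : 1 ≤ k) (hcard : Fintype.card V = k)
    (hmax : ∀ v : V, K.degree v ≤ Δ) (hmax' : ∃ v : V, K.degree v = Δ) :
    Nat.card {P : Finset (Finset V) //
        (∀ A ∈ P, A.Nonempty ∧ (K.induce (A : Set V)).Connected) ∧
        (∀ A ∈ P, ∀ B ∈ P, A ≠ B → Disjoint A B) ∧
        P.sup id = Finset.univ} ≤ (10 * Δ) ^ k := by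
  classical
  have hne : Nonempty V := Fintype.card_pos_iff.mp (by omega)
  set T : Finset (V → Option V) :=
    Fintype.piFinset (fun v => insert none ((K.neighborFinset v).image some)) with hT
  have hmemT : ∀ (P : {P : Finset (Finset V) //
        (∀ A ∈ P, A.Nonempty ∧ (K.induce (A : Set V)).Connected) ∧
        (∀ A ∈ P, ∀ B ∈ P, A ≠ B → Disjoint A B) ∧
        P.sup id = Finset.univ}),
      (exists_code K P.1 P.2.1 P.2.2.1 P.2.2.2).choose ∈ T := by
    intro P
    rw [hT, Fintype.mem_piFinset]
    intro v
    rcases h0 : (exists_code K P.1 P.2.1 P.2.2.1 P.2.2.2).choose v with _ | u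
    · exact Finset.mem_insert_self _ _
    · apply Finset.mem_insert_of_mem
      apply Finset.mem_image_of_mem
      rw [SimpleGraph.mem_neighborFinset]
      exact (exists_code K P.1 P.2.1 P.2.2.1 P.2.2.2).choose_spec.1 v u h0
  have step1 : Nat.card {P : Finset (Finset V) //
        (∀ A ∈ P, A.Nonempty ∧ (K.induce (A : Set V)).Connected) ∧
        (∀ A ∈ P, ∀ B ∈ P, A ≠ B → Disjoint A B) ∧
        P.sup id = Finset.univ} ≤ T.card := by
    rw [← Nat.card_eq_finsetCard]
    apply Nat.card_le_card_of_injective (fun P => (⟨_, hmemT P⟩ : T))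
    intro P Q h
    have hfeq : (exists_code K P.1 P.2.1 P.2.2.1 P.2.2.2).choose
        = (exists_code K Q.1 Q.2.1 Q.2.2.1 Q.2.2.2).choose := congrArg Subtype.val h
    have hP := (exists_code K P.1 P.2.1 P.2.2.1 P.2.2.2).choose_spec.2
    have hQ := (exists_code K Q.1 Q.2.1 Q.2.2.1 Q.2.2.2).choose_spec.2
    exact Subtype.ext (by rw [← hP, ← hQ, hfeq])
  have hcardT : T.card = ∏ v : V, (K.degree v + 1) := by
    rw [hT, Fintype.card_piFinset]
    apply Finset.prod_congr rfl
    intro v _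
    rw [Finset.card_insert_of_notMem (by simp),
      Finset.card_image_of_injective _ (Option.some_injective V),
      SimpleGraph.card_neighborFinset_eq_degree]
  have hprod : ∏ v : V, (K.degree v + 1) ≤ (Δ + 1) ^ k := by
    calc ∏ v : V, (K.degree v + 1) ≤ ∏ _v : V, (Δ + 1) :=
          Finset.prod_le_prod (fun _ _ => Nat.zero_le _) (fun v _ => by have := hmax v; omega)
      _ = (Δ + 1) ^ k := by rw [Finset.prod_const, Finset.card_univ, hcard]
  have hfinal : (Δ + 1) ^ k ≤ (10 * Δ) ^ k := Nat.pow_le_pow_left (by omega) k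
  omega
end

section
/- Let V ⊆ ℝ with |V| = n, let u, v ∈ V, let φ: {u, v} → ℝ with |u − v| ≠ |φ(u) − φ(v)|, and let s ≤ (ln n)/50. Form a path P = u = v₀, v₁, ..., v_s = v whose internal vertices are chosen uniformly at random (without repetition) from V. Then the probability that φ extends to a P-rigid map on V(P) is at most 1/√n. -/
/-- The vertices of a path of length `s` from `u` to `v` whose internal vertices
are given by `g : Fin (s-1) → ℝ`. -/
noncomputable def pathVert (u v : ℝ) (s : ℕ) (g : Fin (s - 1) → ℝ) :
    Fin (s + 1) → ℝ :=
  fun i =>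
    if h0 : i.val = 0 then u
    else if hs : i.val = s then v
    else g ⟨i.val - 1, by have := i.isLt; omega⟩

lemma pathVert_zero (u v : ℝ) (s : ℕ) (g : Fin (s - 1) → ℝ) (i : Fin (s + 1))
    (h : i.val = 0) : pathVert u v s g i = u := by
  rw [pathVert, dif_pos h]

lemma pathVert_last (u v : ℝ) (s : ℕ) (hs : s ≠ 0) (g : Fin (s - 1) → ℝ) (i : Fin (s + 1))
    (h : i.val = s) : pathVert u v s g i = v := by
  rw [pathVert, dif_neg (by omega), dif_pos h]

lemma pathVert_mid (u v : ℝ) (s : ℕ) (g : Fin (s - 1) → ℝ) (i : Fin (s + 1)) (l : Fin (s - 1))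
    (h : i.val = l.val + 1) : pathVert u v s g i = g l := by
  have hl := l.isLt
  rw [pathVert, dif_neg (by omega), dif_neg (by omega)]
  congr 1
  exact Fin.ext (by simp [h])

lemma tele {k : ℕ} (f : Fin (k + 1) → ℝ) :
    ∑ i : Fin k, (f i.succ - f i.castSucc) = f (Fin.last k) - f 0 := by
  rw [Finset.sum_sub_distrib]
  have h1 := Fin.sum_univ_succ f
  have h2 := Fin.sum_univ_castSucc f
  linarith

noncomputable def eR (b : Bool) : ℝ := if b then 1 else -1

lemma eR_ne {a b : Bool} (h : a ≠ b) : eR a - eR b ≠ 0 := by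
  cases a <;> cases b <;> simp_all [eR] <;> norm_num

lemma aux_card (t : ℕ) (S : Type) [Fintype S] (val : S → ℝ) (hval : Function.Injective val)
    (u v φu φv : ℝ) (hφ : |u - v| ≠ |φu - φv|) :
    Nat.card {g : Fin (t + 1) ↪ S // ∃ ψ : Fin (t + 3) → ℝ,
        ψ 0 = φu ∧ ψ (Fin.last (t + 2)) = φv ∧
        ∀ i : Fin (t + 2), |ψ i.succ - ψ i.castSucc| =
          |pathVert u v (t + 2) (fun j => val (g j)) i.succ -
            pathVert u v (t + 2) (fun j => val (g j)) i.castSucc|}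
      ≤ 2 ^ (t + 2) * Fintype.card S ^ t := by
  classical
  set T := {g : Fin (t + 1) ↪ S // ∃ ψ : Fin (t + 3) → ℝ,
        ψ 0 = φu ∧ ψ (Fin.last (t + 2)) = φv ∧
        ∀ i : Fin (t + 2), |ψ i.succ - ψ i.castSucc| =
          |pathVert u v (t + 2) (fun j => val (g j)) i.succ -
            pathVert u v (t + 2) (fun j => val (g j)) i.castSucc|} with hT
  -- key existence of sign vector
  have key : ∀ (g : Fin (t + 1) → ℝ) (ψ : Fin (t + 3) → ℝ), ψ 0 = φu →
      ψ (Fin.last (t + 2)) = φv →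
      (∀ i : Fin (t + 2), |ψ i.succ - ψ i.castSucc| =
        |pathVert u v (t + 2) g i.succ - pathVert u v (t + 2) g i.castSucc|) →
      ∃ ε : Fin (t + 2) → Bool,
        (∑ i : Fin (t + 2), eR (ε i) *
            (pathVert u v (t + 2) g i.succ - pathVert u v (t + 2) g i.castSucc)
          = φv - φu) ∧
        ∃ j : Fin (t + 1), ε j.castSucc ≠ ε j.succ := by
    intro g ψ h0 hl habs
    set p := pathVert u v (t + 2) g with hp
    refine ⟨fun i => decide (ψ i.succ - ψ i.castSucc = p i.succ - p i.castSucc), ?_, ?_⟩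
    · have hpt : ∀ i : Fin (t + 2),
          eR (decide (ψ i.succ - ψ i.castSucc = p i.succ - p i.castSucc)) *
            (p i.succ - p i.castSucc) = ψ i.succ - ψ i.castSucc := by
        intro i
        by_cases h : ψ i.succ - ψ i.castSucc = p i.succ - p i.castSucc
        · simp [eR, h]
        · rcases abs_eq_abs.mp (habs i) with h' | h'
          · exact absurd h' h
          · simp [eR, h]
            linarith
      calc ∑ i : Fin (t + 2), eR (decide (ψ i.succ - ψ i.castSucc = p i.succ - p i.castSucc)) *
              (p i.succ - p i.castSucc)
          = ∑ i : Fin (t + 2), (ψ i.succ - ψ i.castSucc) :=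
            Finset.sum_congr rfl fun i _ => hpt i
        _ = ψ (Fin.last (t + 2)) - ψ 0 := tele ψ
        _ = φv - φu := by rw [h0, hl]
    · by_contra hcon
      push_neg at hcon
      set ε : Fin (t + 2) → Bool :=
        fun i => decide (ψ i.succ - ψ i.castSucc = p i.succ - p i.castSucc) with hε
      have hcon' : ∀ j : Fin (t + 1), ε j.castSucc = ε j.succ := fun j => hcon j
      have hconst : ∀ i : Fin (t + 2), ε i = ε 0 := by
        intro i
        induction i using Fin.induction with
        | zero => rfl
        | succ i ih => rw [← hcon' i]; exact ih
      have hpt : ∀ i : Fin (t + 2),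
          eR (ε i) * (p i.succ - p i.castSucc) = ψ i.succ - ψ i.castSucc := by
        intro i
        by_cases h : ψ i.succ - ψ i.castSucc = p i.succ - p i.castSucc
        · simp [hε, eR, h]
        · rcases abs_eq_abs.mp (habs i) with h' | h'
          · exact absurd h' h
          · simp [hε, eR, h]
            linarith
      have hsum : eR (ε 0) * (v - u) = φv - φu := by
        calc eR (ε 0) * (v - u)
            = eR (ε 0) * (p (Fin.last (t + 2)) - p 0) := by
              rw [hp, pathVert_last u v (t + 2) (by omega) g _ (by simp),
                pathVert_zero u v (t + 2) g _ (by simp)]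
          _ = ∑ i : Fin (t + 2), eR (ε 0) * (p i.succ - p i.castSucc) := by
              rw [← Finset.mul_sum, tele p]
          _ = ∑ i : Fin (t + 2), eR (ε i) * (p i.succ - p i.castSucc) := by
              exact Finset.sum_congr rfl fun i _ => by rw [hconst i]
          _ = ∑ i : Fin (t + 2), (ψ i.succ - ψ i.castSucc) :=
              Finset.sum_congr rfl fun i _ => hpt i
          _ = ψ (Fin.last (t + 2)) - ψ 0 := tele ψ
          _ = φv - φu := by rw [h0, hl]
      apply hφ
      rw [abs_sub_comm u v, abs_sub_comm φu φv, ← hsum]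
      cases h0 : ε 0 <;> simp [eR, neg_one_mul, neg_sub, abs_neg, abs_sub_comm]
  have exists_eps : ∀ x : T, ∃ ε : Fin (t + 2) → Bool,
      (∑ i : Fin (t + 2), eR (ε i) *
          (pathVert u v (t + 2) (fun j => val (x.1 j)) i.succ -
            pathVert u v (t + 2) (fun j => val (x.1 j)) i.castSucc) = φv - φu) ∧
      ∃ j : Fin (t + 1), ε j.castSucc ≠ ε j.succ := by
    rintro ⟨g, ψ, h0, hl, habs⟩
    exact key _ ψ h0 hl habs
  set jf : (Fin (t + 2) → Bool) → Fin (t + 1) := fun b =>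
    if h : ∃ j : Fin (t + 1), b j.castSucc ≠ b j.succ then h.choose else 0 with hjf
  set F : T → (Fin (t + 2) → Bool) × (Fin t → S) := fun x =>
    ((exists_eps x).choose, fun k => x.1 ((jf (exists_eps x).choose).succAbove k)) with hF
  have hinj : Function.Injective F := by
    intro x y hxy
    have hε : (exists_eps x).choose = (exists_eps y).choose := congrArg Prod.fst hxy
    obtain ⟨hsumx, hexx⟩ := (exists_eps x).choose_spec
    obtain ⟨hsumy, hexy⟩ := (exists_eps y).choose_spec
    set b : Fin (t + 2) → Bool := (exists_eps x).choose with hb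
    rw [← hε] at hsumy hexy
    set j : Fin (t + 1) := jf b with hjdef
    have hj : b j.castSucc ≠ b j.succ := by
      rw [hjdef, hjf]
      simp only []
      rw [dif_pos hexx]
      exact hexx.choose_spec
    have hsnd : (fun k => x.1 ((jf (exists_eps x).choose).succAbove k))
        = (fun k => y.1 ((jf (exists_eps y).choose).succAbove k)) := congrArg Prod.snd hxy
    rw [← hε] at hsnd
    rw [← hb, ← hjdef] at hsnd
    have hoff : ∀ l : Fin (t + 1), l ≠ j → x.1 l = y.1 l := by
      intro l hl
      obtain ⟨k, hk⟩ := Fin.exists_succAbove_eq hl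
      have hck := congrFun hsnd k
      rw [hk] at hck
      exact hck
    have hq : ∀ i : Fin (t + 3), i.val ≠ j.val + 1 →
        pathVert u v (t + 2) (fun j' => val (x.1 j')) i
          = pathVert u v (t + 2) (fun j' => val (y.1 j')) i := by
      intro i hi
      by_cases hz : i.val = 0
      · rw [pathVert_zero u v (t + 2) _ i hz, pathVert_zero u v (t + 2) _ i hz]
      · by_cases hlast : i.val = t + 2
        · rw [pathVert_last u v (t + 2) (by omega) _ i hlast,
            pathVert_last u v (t + 2) (by omega) _ i hlast]
        · have hi2 := i.isLt
          have hl1 : i.val - 1 < t + 1 := by omega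
          set l : Fin (t + 1) := ⟨i.val - 1, hl1⟩ with hldef
          have hl : i.val = l.val + 1 := by
            rw [hldef]
            show i.val = i.val - 1 + 1
            omega
          rw [pathVert_mid u v (t + 2) _ i l hl, pathVert_mid u v (t + 2) _ i l hl]
          have hlj : l ≠ j := by
            intro h
            apply hi
            have : l.val = j.val := congrArg Fin.val h
            omega
          exact congrArg val (hoff l hlj)
    set qX := pathVert u v (t + 2) (fun j' => val (x.1 j')) with hqX
    set qY := pathVert u v (t + 2) (fun j' => val (y.1 j')) with hqY
    set r : Fin (t + 3) → ℝ := fun i => qX i - qY i with hrdef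
    have hr0 : ∀ i : Fin (t + 3), i.val ≠ j.val + 1 → r i = 0 := by
      intro i hi
      rw [hrdef]
      exact sub_eq_zero.mpr (hq i hi)
    have e2 : ∑ i : Fin (t + 2), eR (b i) * (r i.succ - r i.castSucc) = 0 := by
      have hsplit : ∀ i : Fin (t + 2), eR (b i) * (r i.succ - r i.castSucc)
          = eR (b i) * (qX i.succ - qX i.castSucc) - eR (b i) * (qY i.succ - qY i.castSucc) := by
        intro i; rw [hrdef]; ring
      rw [Finset.sum_congr rfl fun i _ => hsplit i, Finset.sum_sub_distrib, hsumx, hsumy]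
      ring
    have e3 : ∑ i : Fin (t + 2), eR (b i) * r i.succ = eR (b j.castSucc) * r j.castSucc.succ := by
      apply Finset.sum_eq_single
      · intro i _ hi
        have hvi : i.val ≠ j.val := by
          intro hh
          exact hi (Fin.ext (by simp [hh]))
        have : r i.succ = 0 := by
          apply hr0
          simp only [Fin.val_succ]
          omega
        rw [this, mul_zero]
      · intro h; exact absurd (Finset.mem_univ _) h
    have e4 : ∑ i : Fin (t + 2), eR (b i) * r i.castSucc = eR (b j.succ) * r j.succ.castSucc := by
      apply Finset.sum_eq_single
      · intro i _ hi
        have hvi : i.val ≠ j.val + 1 := by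
          intro hh
          exact hi (Fin.ext (by simp [Fin.val_succ, hh]))
        have : r i.castSucc = 0 := by
          apply hr0
          simp only [Fin.coe_castSucc]
          omega
        rw [this, mul_zero]
      · intro h; exact absurd (Finset.mem_univ _) h
    have e5 : (eR (b j.castSucc) - eR (b j.succ)) * r j.castSucc.succ = 0 := by
      have := e2
      rw [Finset.sum_congr rfl (fun i _ => mul_sub (eR (b i)) (r i.succ) (r i.castSucc)),
        Finset.sum_sub_distrib, e3, e4, ← Fin.succ_castSucc] at this
      linear_combination this
    have hrj : r j.castSucc.succ = 0 := by
      rcases mul_eq_zero.mp e5 with h | h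
      · exact absurd h (eR_ne hj)
      · exact h
    have hxyj : x.1 j = y.1 j := by
      apply hval
      have h1 : qX j.castSucc.succ = val (x.1 j) := by
        rw [hqX]
        exact pathVert_mid u v (t + 2) _ _ j (by simp)
      have h2 : qY j.castSucc.succ = val (y.1 j) := by
        rw [hqY]
        exact pathVert_mid u v (t + 2) _ _ j (by simp)
      rw [hrdef] at hrj
      simp only [] at hrj
      rw [h1, h2] at hrj
      linarith
    apply Subtype.ext
    apply DFunLike.ext
    intro l
    by_cases hlj : l = j
    · rw [hlj]; exact hxyj
    · exact hoff l hlj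
  calc Nat.card T ≤ Nat.card ((Fin (t + 2) → Bool) × (Fin t → S)) :=
        Nat.card_le_card_of_injective F hinj
    _ = 2 ^ (t + 2) * Fintype.card S ^ t := by
        rw [Nat.card_prod, Nat.card_fun, Nat.card_fun]
        simp [Nat.card_eq_fintype_card]

set_option maxRecDepth 8000 in
/-- Let `V ⊆ ℝ` with `|V| = n`, `u, v ∈ V`, `φ` defined on `{u, v}` with
`|u − v| ≠ |φ(u) − φ(v)|`, and `s ≤ ln n / 50`.  If the internal vertices of a path
from `u` to `v` of length `s` are chosen uniformly at random without repetition from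
`V`, then the probability that `φ` extends to a `P`-rigid map is at most `1/√n`
(for all sufficiently large `n`).  Probability is expressed as a ratio of counts
over the uniformly random injection `g`. -/
theorem stmt_6 :
    ∃ N : ℕ, ∀ n : ℕ, N ≤ n → ∀ V : Finset ℝ, V.card = n →
      ∀ u v : ℝ, u ∈ V → v ∈ V → ∀ φu φv : ℝ,
        |u - v| ≠ |φu - φv| →
        ∀ s : ℕ, 1 ≤ s → (s : ℝ) ≤ Real.log n / 50 →
        (Nat.card {g : Fin (s - 1) ↪ {x : ℝ // x ∈ V ∧ x ≠ u ∧ x ≠ v} //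
            ∃ ψ : Fin (s + 1) → ℝ,
              ψ 0 = φu ∧ ψ (Fin.last s) = φv ∧
              ∀ i : Fin s,
                |ψ i.succ - ψ i.castSucc| =
                  |pathVert u v s (fun j => (g j : ℝ)) i.succ -
                    pathVert u v s (fun j => (g j : ℝ)) i.castSucc|} : ℝ)
          ≤ (Nat.card (Fin (s - 1) ↪ {x : ℝ // x ∈ V ∧ x ≠ u ∧ x ≠ v}) : ℝ)
              / Real.sqrt n := by
  classical
  refine ⟨2 ^ 100, ?_⟩
  intro n hn V hV u v hu hv φu φv hφ s hs1 hslog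
  have hn4 : 4 ≤ n := le_trans (by norm_num) hn
  have hnR : (2 : ℝ) ^ 100 ≤ (n : ℝ) := by exact_mod_cast hn
  have hbig : (100 : ℝ) ≤ (n : ℝ) := le_trans (by norm_num) hnR
  have hnR0 : (0 : ℝ) < (n : ℝ) := by linarith
  have hsqrt0 : 0 < Real.sqrt n := Real.sqrt_pos.mpr hnR0
  haveI hfin : Finite {x : ℝ // x ∈ V ∧ x ≠ u ∧ x ≠ v} :=
    Set.Finite.to_subtype (V.finite_toSet.subset (fun x hx => hx.1))
  haveI : Fintype {x : ℝ // x ∈ V ∧ x ≠ u ∧ x ≠ v} := Fintype.ofFinite _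
  set m := Fintype.card {x : ℝ // x ∈ V ∧ x ≠ u ∧ x ≠ v} with hm
  have hm2 : n - 2 ≤ m := by
    have hfil : V \ {u, v} = V.filter (fun x => x ≠ u ∧ x ≠ v) := by
      ext x
      simp only [Finset.mem_sdiff, Finset.mem_filter, Finset.mem_insert,
        Finset.mem_singleton]
      tauto
    have h1 : Nat.card {x : ℝ // x ∈ V ∧ x ≠ u ∧ x ≠ v}
        = Nat.card {x : ℝ // x ∈ V.filter (fun x => x ≠ u ∧ x ≠ v)} :=
      Nat.card_congr (Equiv.subtypeEquivRight (fun x => by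
        simp [Finset.mem_filter, and_assoc]))
    have h2 : Nat.card {x : ℝ // x ∈ V.filter (fun x => x ≠ u ∧ x ≠ v)}
        = (V.filter (fun x => x ≠ u ∧ x ≠ v)).card := by
      rw [Nat.card_eq_fintype_card]
      exact Fintype.card_coe _
    have h3 : V.card - ({u, v} : Finset ℝ).card ≤ (V \ ({u, v} : Finset ℝ)).card :=
      Finset.le_card_sdiff _ _
    have h4 : ({u, v} : Finset ℝ).card ≤ 2 := by
      apply le_trans (Finset.card_insert_le _ _)
      simp
    rw [hfil] at h3
    have h5 : m = (V.filter (fun x => x ≠ u ∧ x ≠ v)).card := by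
      rw [hm, ← Nat.card_eq_fintype_card, h1, h2]
    omega
  clear_value m
  have hlog_le : Real.log n ≤ 2 * Real.sqrt n := by
    have h1 : Real.log (Real.sqrt n) ≤ Real.sqrt n - 1 :=
      Real.log_le_sub_one_of_pos hsqrt0
    have h2 : Real.log (Real.sqrt n) = Real.log n / 2 := Real.log_sqrt hnR0.le
    linarith
  have hs_sqrt : (s : ℝ) ≤ Real.sqrt n / 25 := by linarith
  have hsq_n : Real.sqrt n * Real.sqrt n = (n : ℝ) := Real.mul_self_sqrt hnR0.le
  have hs2n : (s : ℝ) ^ 2 ≤ (n : ℝ) / 625 := by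
    calc (s : ℝ) ^ 2 ≤ (Real.sqrt n / 25) ^ 2 :=
          pow_le_pow_left₀ (by positivity) hs_sqrt 2
      _ = (Real.sqrt n * Real.sqrt n) / 625 := by ring
      _ = (n : ℝ) / 625 := by rw [hsq_n]
  have hsn : (s : ℝ) ≤ (n : ℝ) / 50 := by
    have hln : Real.log n ≤ (n : ℝ) - 1 := Real.log_le_sub_one_of_pos hnR0
    linarith
  rcases eq_or_lt_of_le hs1 with hseq | hs2'
  · -- the case s = 1 : the set is empty
    subst hseq
    have hempty : IsEmpty {g : Fin (1 - 1) ↪ {x : ℝ // x ∈ V ∧ x ≠ u ∧ x ≠ v} //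
        ∃ ψ : Fin (1 + 1) → ℝ,
          ψ 0 = φu ∧ ψ (Fin.last 1) = φv ∧
          ∀ i : Fin 1,
            |ψ i.succ - ψ i.castSucc| =
              |pathVert u v 1 (fun j => (g j : ℝ)) i.succ -
                pathVert u v 1 (fun j => (g j : ℝ)) i.castSucc|} := by
      constructor
      rintro ⟨g, ψ, h0, hl, habs⟩
      have h := habs 0
      have e1 : (0 : Fin 1).succ = Fin.last 1 := rfl
      have e2 : (0 : Fin 1).castSucc = 0 := rfl
      rw [e1, e2, h0, hl] at h
      rw [pathVert_last u v 1 (by omega) _ _ (by simp),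
        pathVert_zero u v 1 _ _ (by simp)] at h
      exact hφ (by rw [abs_sub_comm u v, abs_sub_comm φu φv]; exact h.symm)
    haveI := hempty
    rw [Nat.card_of_isEmpty]
    push_cast
    positivity
  · -- the main case 2 ≤ s
    obtain ⟨t, rfl⟩ : ∃ t, s = t + 2 := ⟨s - 2, by omega⟩
    have hmn : (n : ℝ) - 2 ≤ (m : ℝ) := by
      have h := (Nat.cast_le (α := ℝ)).mpr hm2
      have hn2 : 2 ≤ n := by omega
      rw [Nat.cast_sub hn2] at h
      push_cast at h ⊢
      linarith
    have hsRn : (t : ℝ) + 2 ≤ (n : ℝ) / 50 := by push_cast at hsn; linarith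
    have hsR2 : ((t : ℝ) + 2) ^ 2 ≤ (n : ℝ) / 625 := by push_cast at hs2n; linarith
    have hM0 : (0 : ℝ) < (m : ℝ) := by linarith
    have hA0 : (n : ℝ) / 2 ≤ (m : ℝ) - ((t : ℝ) + 2) := by linarith
    have hApos : (0 : ℝ) < (m : ℝ) - ((t : ℝ) + 2) := by linarith
    have hbern : (m : ℝ) ^ t * (1 / 2) ≤ ((m : ℝ) - ((t : ℝ) + 2)) ^ t := by
      set M : ℝ := (m : ℝ) with hMdef
      set sR : ℝ := (t : ℝ) + 2 with hsRdef
      have ha : (-2 : ℝ) ≤ -(sR / M) := by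
        have h1 : sR / M ≤ 2 := by
          rw [div_le_iff₀ hM0]
          linarith
        linarith
      have hb := one_add_mul_le_pow ha t
      have h12 : (1 : ℝ) / 2 ≤ 1 + (t : ℝ) * (-(sR / M)) := by
        have ht : (t : ℝ) ≤ sR := by rw [hsRdef]; linarith
        have hs0 : (0 : ℝ) ≤ sR := by rw [hsRdef]; positivity
        have h1 : (t : ℝ) * sR ≤ sR ^ 2 := by
          calc (t : ℝ) * sR ≤ sR * sR := mul_le_mul_of_nonneg_right ht hs0
            _ = sR ^ 2 := by ring
        have h2 : (t : ℝ) * (sR / M) ≤ 1 / 2 := by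
          rw [← mul_div_assoc, div_le_iff₀ hM0]
          linarith
        linarith
      have h3 : M ^ t * (1 / 2) ≤ M ^ t * (1 + (t : ℝ) * (-(sR / M))) :=
        mul_le_mul_of_nonneg_left h12 (pow_nonneg hM0.le t)
      have h4 : M ^ t * (1 + (t : ℝ) * (-(sR / M))) ≤ M ^ t * (1 + -(sR / M)) ^ t :=
        mul_le_mul_of_nonneg_left hb (pow_nonneg hM0.le t)
      have h5 : M ^ t * (1 + -(sR / M)) ^ t = (M - sR) ^ t := by
        rw [← mul_pow]
        congr 1
        field_simp
        ring
      linarith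
    have h2exp : (2 : ℝ) ^ (t + 2) ≤ (n : ℝ) ^ ((1 : ℝ) / 50) := by
      have hlog2 : Real.log 2 ≤ 1 := by
        have := Real.log_le_sub_one_of_pos (by norm_num : (0 : ℝ) < 2)
        linarith
      have hlog2' : 0 ≤ Real.log 2 := Real.log_nonneg (by norm_num)
      have hsR0 : (0 : ℝ) ≤ (t : ℝ) + 2 := by positivity
      have h1 : ((t : ℝ) + 2) * Real.log 2 ≤ Real.log n * (1 / 50) := by
        have h2 : ((t : ℝ) + 2) * Real.log 2 ≤ ((t : ℝ) + 2) * 1 :=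
          mul_le_mul_of_nonneg_left hlog2 hsR0
        have h3 : (t : ℝ) + 2 ≤ Real.log n / 50 := by push_cast at hslog; linarith
        linarith
      calc (2 : ℝ) ^ (t + 2) = (2 : ℝ) ^ (((t + 2 : ℕ)) : ℝ) := by
            rw [Real.rpow_natCast]
        _ = Real.exp (Real.log 2 * ((t + 2 : ℕ) : ℝ)) := by
            rw [Real.rpow_def_of_pos (by norm_num)]
        _ ≤ Real.exp (Real.log n * (1 / 50)) := by
            apply Real.exp_le_exp.mpr
            push_cast
            linarith [h1]
        _ = (n : ℝ) ^ ((1 : ℝ) / 50) := by rw [← Real.rpow_def_of_pos hnR0]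
    have hn1225 : (4 : ℝ) ≤ (n : ℝ) ^ ((12 : ℝ) / 25) := by
      have h1 : ((2 : ℝ) ^ (100 : ℕ)) ^ ((12 : ℝ) / 25) ≤ (n : ℝ) ^ ((12 : ℝ) / 25) :=
        Real.rpow_le_rpow (by positivity) hnR (by norm_num)
      have h2 : ((2 : ℝ) ^ (100 : ℕ)) ^ ((12 : ℝ) / 25) = (2 : ℝ) ^ (48 : ℕ) := by
        rw [← Real.rpow_natCast 2 100, ← Real.rpow_mul (by norm_num : (0 : ℝ) ≤ 2),
          ← Real.rpow_natCast 2 48]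
        norm_num
      rw [h2] at h1
      refine le_trans (by norm_num) h1
    have hsqrt_eq : Real.sqrt n = (n : ℝ) ^ ((1 : ℝ) / 2) := Real.sqrt_eq_rpow _
    have hkey : 2 * ((n : ℝ) ^ ((1 : ℝ) / 50) * Real.sqrt n) ≤ (n : ℝ) / 2 := by
      rw [hsqrt_eq, ← Real.rpow_add hnR0]
      have e : (1 : ℝ) / 50 + 1 / 2 = 13 / 25 := by norm_num
      rw [e]
      have h1 : 2 * (n : ℝ) ^ ((13 : ℝ) / 25)
          ≤ ((n : ℝ) ^ ((12 : ℝ) / 25) / 2) * (n : ℝ) ^ ((13 : ℝ) / 25) := by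
        apply mul_le_mul_of_nonneg_right _ (Real.rpow_nonneg hnR0.le _)
        linarith
      have h2 : ((n : ℝ) ^ ((12 : ℝ) / 25)) * (n : ℝ) ^ ((13 : ℝ) / 25) = (n : ℝ) := by
        rw [← Real.rpow_add hnR0]
        norm_num
      have h3 : ((n : ℝ) ^ ((12 : ℝ) / 25) / 2) * (n : ℝ) ^ ((13 : ℝ) / 25)
          = (n : ℝ) / 2 := by
        rw [div_mul_eq_mul_div, h2]
      linarith
    have hA : (2 : ℝ) ^ (t + 2) * (2 * Real.sqrt n) ≤ (m : ℝ) - ((t : ℝ) + 2) := by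
      have h1 : (2 : ℝ) ^ (t + 2) * (2 * Real.sqrt n)
          ≤ (n : ℝ) ^ ((1 : ℝ) / 50) * (2 * Real.sqrt n) :=
        mul_le_mul_of_nonneg_right h2exp (by positivity)
      have h2 : (n : ℝ) ^ ((1 : ℝ) / 50) * (2 * Real.sqrt n)
          = 2 * ((n : ℝ) ^ ((1 : ℝ) / 50) * Real.sqrt n) := by ring
      linarith
    have hts : t + 1 ≤ m := by
      have h : ((t : ℝ) + 1) ≤ (m : ℝ) := by linarith
      exact_mod_cast h
    have hlow : (m - (t + 1)) ^ (t + 1) ≤ m.descFactorial (t + 1) :=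
      le_trans (Nat.pow_le_pow_left (by omega) (t + 1))
        (Nat.pow_sub_le_descFactorial m (t + 1))
    have hAcast : ((m - (t + 1) : ℕ) : ℝ) = (m : ℝ) - ((t : ℝ) + 1) := by
      rw [Nat.cast_sub hts]
      push_cast
      ring
    have hT : Nat.card {g : Fin (t + 2 - 1) ↪ {x : ℝ // x ∈ V ∧ x ≠ u ∧ x ≠ v} //
        ∃ ψ : Fin (t + 2 + 1) → ℝ,
          ψ 0 = φu ∧ ψ (Fin.last (t + 2)) = φv ∧
          ∀ i : Fin (t + 2),
            |ψ i.succ - ψ i.castSucc| =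
              |pathVert u v (t + 2) (fun j => (g j : ℝ)) i.succ -
                pathVert u v (t + 2) (fun j => (g j : ℝ)) i.castSucc|}
        ≤ 2 ^ (t + 2) * m ^ t := by
      rw [hm]
      exact aux_card t {x : ℝ // x ∈ V ∧ x ≠ u ∧ x ≠ v} (fun a => (a : ℝ))
        Subtype.coe_injective u v φu φv hφ
    have hden : Nat.card (Fin (t + 2 - 1) ↪ {x : ℝ // x ∈ V ∧ x ≠ u ∧ x ≠ v})
        = m.descFactorial (t + 1) := by
      rw [Nat.card_eq_fintype_card, Fintype.card_embedding_eq, Fintype.card_fin, hm]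
      rfl
    rw [le_div_iff₀ hsqrt0]
    refine le_trans (mul_le_mul_of_nonneg_right
      (show _ ≤ 2 ^ (t + 2) * (m : ℝ) ^ t by exact_mod_cast hT)
      (Real.sqrt_nonneg _)) ?_
    calc (2 ^ (t + 2) * (m : ℝ) ^ t) * Real.sqrt n
        = ((2 : ℝ) ^ (t + 2) * (2 * Real.sqrt n)) * ((m : ℝ) ^ t * (1 / 2)) := by
          ring
      _ ≤ ((m : ℝ) - ((t : ℝ) + 2)) * (((m : ℝ) - ((t : ℝ) + 2)) ^ t) :=
          mul_le_mul hA hbern (by positivity) hApos.le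
      _ = ((m : ℝ) - ((t : ℝ) + 2)) ^ (t + 1) := by rw [pow_succ]; ring
      _ ≤ ((m : ℝ) - ((t : ℝ) + 1)) ^ (t + 1) := by
          apply pow_le_pow_left₀ hApos.le
          linarith
      _ = ((m - (t + 1) : ℕ) : ℝ) ^ (t + 1) := by rw [hAcast]
      _ = (((m - (t + 1)) ^ (t + 1) : ℕ) : ℝ) := by push_cast; ring
      _ ≤ ((m.descFactorial (t + 1) : ℕ) : ℝ) := Nat.cast_le.mpr hlow
      _ = _ := by rw [hden]
end

section
/- Let V ⊆ ℝ with |V| = n, let u, v ∈ V, let φ: {u, v} → ℝ with |u − v| = |φ(u) − φ(v)|, and let s ≤ (ln n)/50. Form a path P = u = v₀, v₁, ..., v_s = v whose internal vertices are chosen uniformly at random (without repetition) from V. Then the probability that φ extends to a P-rigid map in a non-trivial way is at most 1/√n. -/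
open Finset Function

section Increments

variable {α : Type*} [AddCommGroup α] {k : ℕ}

theorem Fin.sum_succ_sub_castSucc (f : Fin (k + 1) → α) :
    ∑ i : Fin k, (f i.succ - f i.castSucc) = f (Fin.last k) - f 0 := by
  induction k with
  | zero => simp
  | succ k ih =>
    rw [Fin.sum_univ_castSucc]
    simp only [Fin.succ_castSucc]
    rw [ih (fun i => f i.castSucc)]
    simp only [castSucc_zero, succ_last, sub_add_sub_cancel']

theorem Fin.eq_add_of_forall_succ_sub_castSucc_eq {f g : Fin (k + 1) → α}
    (h : ∀ i : Fin k, f i.succ - f i.castSucc = g i.succ - g i.castSucc) (i : Fin (k + 1)) :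
    f i = g i + (f 0 - g 0) := by
  induction i using Fin.induction with
  | zero => abel
  | succ i ih => rw [← sub_eq_iff_eq_add', ← sub_add_sub_cancel _ (f i.castSucc), h i, ih]; abel

end Increments

theorem Fin.eq_apply_zero_of_forall_castSucc_eq_succ {β : Type*} {k : ℕ} {e : Fin (k + 1) → β}
    (h : ∀ i : Fin k, e i.castSucc = e i.succ) (i : Fin (k + 1)) : e i = e 0 := by
  induction i using Fin.induction with
  | zero => rfl
  | succ i ih => rw [← h i, ih]

def signedIncrementSum {k : ℕ} (e : Fin k → Bool) (X : Fin (k + 1) → ℝ) : ℝ :=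
  ∑ i, (if e i then 1 else -1) * (X i.succ - X i.castSucc)

theorem signedIncrementSum_update {k : ℕ} (e : Fin (k + 1) → Bool) (X : Fin (k + 2) → ℝ)
    (p : Fin k) (a : ℝ) :
    signedIncrementSum e (update X p.castSucc.succ a) = signedIncrementSum e X +
      ((if e p.castSucc then 1 else -1) - (if e p.succ then 1 else -1)) *
        (a - X p.castSucc.succ) := by
  have hsucc (i : Fin (k + 1)) : i.succ = p.castSucc.succ ↔ i = p.castSucc := Fin.succ_inj
  have hcast (i : Fin (k + 1)) : i.castSucc = p.castSucc.succ ↔ i = p.succ := by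
    rw [Fin.succ_castSucc, Fin.castSucc_inj]
  simp only [signedIncrementSum, update_apply, hsucc, hcast]
  rw [← sub_eq_iff_eq_add', ← Finset.sum_sub_distrib]
  have hterm (x : Fin (k + 1)) :
      (if e x then 1 else -1) *
          ((if x = p.castSucc then a else X x.succ) - if x = p.succ then a else X x.castSucc) -
        (if e x then 1 else -1) * (X x.succ - X x.castSucc) =
      (if e x then 1 else -1) * (if x = p.castSucc then a - X x.succ else 0) -
        (if e x then 1 else -1) * (if x = p.succ then a - X x.castSucc else 0) := by
    split_ifs <;> ring
  simp only [hterm, sum_sub_distrib, mul_ite, mul_zero, sum_ite_eq', mem_univ, if_true,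
    Fin.succ_castSucc]
  ring

def HasNontrivialRigidExtension {k : ℕ} (X : Fin (k + 1) → ℝ) (a b : ℝ) : Prop :=
  ∃ ψ : Fin (k + 1) → ℝ, ψ 0 = a ∧ ψ (Fin.last k) = b ∧
    (∀ i : Fin k, |ψ i.succ - ψ i.castSucc| = |X i.succ - X i.castSucc|) ∧
    ¬ ∃ c : ℝ, (∀ i, ψ i = X i + c) ∨ (∀ i, ψ i = c - X i)

theorem HasNontrivialRigidExtension.exists_signChange {k : ℕ} {X : Fin (k + 2) → ℝ} {a b : ℝ}
    (h : HasNontrivialRigidExtension X a b) :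
    ∃ e : Fin (k + 1) → Bool, (∃ p : Fin k, e p.castSucc ≠ e p.succ) ∧
      signedIncrementSum e X = b - a := by
  obtain ⟨ψ, hψ0, hψlast, hsteps, hnontriv⟩ := h
  set e : Fin (k + 1) → Bool := fun i => ψ i.succ - ψ i.castSucc = X i.succ - X i.castSucc
  have hstep (i : Fin (k + 1)) :
      ψ i.succ - ψ i.castSucc = (if e i then 1 else -1) * (X i.succ - X i.castSucc) := by
    by_cases hi : ψ i.succ - ψ i.castSucc = X i.succ - X i.castSucc
    · simp [e, hi]
    · simp only [e, hi, decide_false, Bool.false_eq_true, if_false]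
      linarith [(abs_eq_abs.1 (hsteps i)).resolve_left hi]
  refine ⟨e, ?_, ?_⟩
  · by_contra! hconst
    apply hnontriv
    have he := Fin.eq_apply_zero_of_forall_castSucc_eq_succ hconst
    cases he0 : e 0
    · refine ⟨ψ 0 + X 0, Or.inr fun i => ?_⟩
      have := Fin.eq_add_of_forall_succ_sub_castSucc_eq (f := ψ) (g := -X) (fun i => by
        simp [hstep i, he i, he0]; ring) i
      simp only [Pi.neg_apply] at this
      linarith
    · exact ⟨ψ 0 - X 0, Or.inl (Fin.eq_add_of_forall_succ_sub_castSucc_eq fun i => by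
        simp [hstep i, he i, he0])⟩
  · simp only [signedIncrementSum, ← hstep, Fin.sum_succ_sub_castSucc, hψ0, hψlast]

section PathVert

variable {u v : ℝ} {t : ℕ}

theorem pathVert_castSucc_succ (G : Fin (t + 1) → ℝ) (p : Fin (t + 1)) :
    pathVert u v (t + 2) G p.castSucc.succ = G p := by
  simp only [pathVert, Fin.val_succ, Fin.val_castSucc]
  rw [dif_neg (by omega), dif_neg (by omega)]
  rfl

theorem pathVert_update (G : Fin (t + 1) → ℝ) (p : Fin (t + 1)) (a : ℝ) :
    pathVert u v (t + 2) (update G p a) = update (pathVert u v (t + 2) G) p.castSucc.succ a := by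
  funext i
  simp only [pathVert, update_apply, Fin.ext_iff, Fin.val_succ, Fin.val_castSucc]
  split_ifs <;> first | rfl | omega

theorem eq_of_signedIncrementSum_pathVert_eq {e : Fin (t + 2) → Bool} {p : Fin (t + 1)}
    (hp : e p.castSucc ≠ e p.succ) {G G' : Fin (t + 1) → ℝ}
    (hrest : Fin.removeNth p G = Fin.removeNth p G')
    (hsum : signedIncrementSum e (pathVert u v (t + 2) G) =
      signedIncrementSum e (pathVert u v (t + 2) G')) : G = G' := by
  have hG' : G' = update G p (G' p) := by
    rw [← Fin.insertNth_removeNth, hrest, Fin.insertNth_self_removeNth]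
  have hsign : (if e p.castSucc then (1 : ℝ) else -1) - (if e p.succ then 1 else -1) ≠ 0 := by
    revert hp; cases e p.castSucc <;> cases e p.succ <;> norm_num
  rw [hG', pathVert_update, signedIncrementSum_update, pathVert_castSucc_succ, left_eq_add,
    mul_eq_zero, or_iff_right hsign, sub_eq_zero] at hsum
  rw [hG', hsum, update_eq_self]

end PathVert

-- Any choice works as long as it depends on the sign pattern alone: this is what makes the
-- encoding of bad paths below injective.
noncomputable def someSignChange {t : ℕ} (e : Fin (t + 2) → Bool) : Fin (t + 1) :=
  Classical.epsilon fun p => e p.castSucc ≠ e p.succ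

theorem card_hasNontrivialRigidExtension_pathVert_le {W : Type*} [Finite W] {f : W → ℝ}
    (hf : Injective f) (u v a b : ℝ) (t : ℕ) :
    Nat.card {g : Fin (t + 1) ↪ W //
        HasNontrivialRigidExtension (pathVert u v (t + 2) fun j => f (g j)) a b} ≤
      2 ^ (t + 2) * Nat.card W ^ t := by
  choose e he hsum using fun g : {g : Fin (t + 1) ↪ W //
    HasNontrivialRigidExtension (pathVert u v (t + 2) fun j => f (g j)) a b} =>
      g.2.exists_signChange
  refine (Nat.card_le_card_of_injective
    (fun g => (e g, Fin.removeNth (someSignChange (e g)) g.1)) fun g g' hgg' => ?_).trans ?_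
  · obtain ⟨he', hrest⟩ := Prod.mk.inj hgg'
    rw [← he'] at hrest
    have hp : e g (someSignChange (e g)).castSucc ≠ e g (someSignChange (e g)).succ :=
      Classical.epsilon_spec (he g)
    refine Subtype.ext (DFunLike.coe_injective (hf.comp_left ?_))
    refine eq_of_signedIncrementSum_pathVert_eq (u := u) (v := v) hp ?_ ((hsum g).trans ?_)
    · exact congrArg (f ∘ ·) hrest
    · rw [he']
      exact (hsum g').symm
  · simp [Nat.card_prod, Nat.card_fun]

instance Finset.finite_subtype_mem_and {α : Type*} (V : Finset α) (p : α → Prop) :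
    Finite {x // x ∈ V ∧ p x} :=
  Finite.of_injective (fun x => (⟨x.1, x.2.1⟩ : V)) fun _ _ h =>
    Subtype.ext (congrArg Subtype.val h :)

theorem Finset.card_le_natCard_subtype_ne_add_two {α : Type*} (V : Finset α) (u v : α) :
    #V ≤ Nat.card {x // x ∈ V ∧ x ≠ u ∧ x ≠ v} + 2 := by
  classical
  have hW : {x // x ∈ V ∧ x ≠ u ∧ x ≠ v} ≃ (V.erase u).erase v :=
    Equiv.subtypeEquivRight fun x => by simp only [mem_erase]; tauto
  rw [Nat.card_congr hW, Nat.card_eq_fintype_card, Fintype.card_coe]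
  have := (V.erase u).pred_card_le_card_erase (a := v)
  have := V.pred_card_le_card_erase (a := u)
  omega

theorem Nat.card_embedding_fin {W : Type*} [Finite W] (k : ℕ) :
    Nat.card (Fin k ↪ W) = (Nat.card W).descFactorial k := by
  have := Fintype.ofFinite W
  rw [Nat.card_eq_fintype_card, Fintype.card_embedding_eq, Fintype.card_fin,
    Nat.card_eq_fintype_card]

theorem four_pow_le_sqrt {x : ℝ} {t : ℕ} (hx : 0 < x) (h : (t : ℝ) ≤ Real.log x / 50) :
    (4 : ℝ) ^ t ≤ √x := by
  rw [← Real.log_le_log_iff (by positivity) (Real.sqrt_pos.2 hx), Real.log_pow,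
    Real.log_sqrt hx.le]
  have h4 : Real.log 4 ≤ 3 := by linarith [Real.log_le_sub_one_of_pos (by norm_num : (0:ℝ) < 4)]
  have ht : (0 : ℝ) ≤ t := t.cast_nonneg
  nlinarith

theorem two_pow_mul_pow_mul_sqrt_le_descFactorial {n m t : ℕ} (hm : n ≤ m + 2)
    (h4 : (4 : ℝ) ^ (t + 2) ≤ √n) :
    2 ^ (t + 2) * (m : ℝ) ^ t * √n ≤ m.descFactorial (t + 1) := by
  set r := √(n : ℝ)
  have hr : 16 ≤ r := le_trans (by norm_num) ((pow_le_pow_right₀ (by norm_num) (by omega :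
    2 ≤ t + 2)).trans h4)
  have hn : r * r = n := Real.mul_self_sqrt n.cast_nonneg
  have hm' : (n : ℝ) ≤ m + 2 := by exact_mod_cast hm
  have ht : (t : ℝ) + 2 ≤ r := le_trans (by exact_mod_cast (Nat.lt_pow_self (by norm_num) :
    t + 2 < 4 ^ (t + 2)).le) h4
  set M := (m : ℝ) - t
  have hM : r * r / 4 ≤ M := by nlinarith
  have htM : (t : ℝ) ≤ M := by nlinarith
  have htm : t ≤ m := by exact_mod_cast (show (t : ℝ) ≤ m by linarith)
  have hpow : (4 : ℝ) ^ (t + 1) * r ≤ M := by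
    have : (4 : ℝ) ^ (t + 1) * 4 ≤ r := by rwa [← pow_succ]
    nlinarith
  calc 2 ^ (t + 2) * (m : ℝ) ^ t * r ≤ 2 ^ (t + 2) * (2 * M) ^ t * r := by
        gcongr; linarith
    _ = 4 ^ (t + 1) * r * M ^ t := by rw [mul_pow, show (4 : ℝ) = 2 * 2 by norm_num, mul_pow]; ring
    _ ≤ M * M ^ t := by gcongr; exact pow_nonneg (by linarith) t
    _ = ((m - t : ℕ) : ℝ) ^ (t + 1) := by rw [Nat.cast_sub htm]; ring
    _ ≤ m.descFactorial (t + 1) := by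
        exact_mod_cast (Nat.pow_sub_le_descFactorial m (t + 1)).trans_eq'
          (by rw [Nat.add_sub_add_right])

/-- Let `V ⊆ ℝ` with `|V| = n`, `u, v ∈ V`, `φ` defined on `{u, v}` with
`|u − v| = |φ(u) − φ(v)|`, and `s ≤ ln n / 50`.  If the internal vertices of a path
from `u` to `v` of length `s` are chosen uniformly at random without repetition from
`V`, then the probability that `φ` extends to a `P`-rigid map in a *non-trivial* way
(i.e. not as a restriction of an isometry of `ℝ`) is at most `1/√n` (for all
sufficiently large `n`).  Probability is expressed as a ratio of counts over the
uniformly random injection `g`. -/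
theorem stmt_7 :
    ∃ N : ℕ, ∀ n : ℕ, N ≤ n → ∀ V : Finset ℝ, V.card = n →
      ∀ u v : ℝ, u ∈ V → v ∈ V → ∀ φu φv : ℝ,
        |u - v| = |φu - φv| →
        ∀ s : ℕ, 1 ≤ s → (s : ℝ) ≤ Real.log n / 50 →
        (Nat.card {g : Fin (s - 1) ↪ {x : ℝ // x ∈ V ∧ x ≠ u ∧ x ≠ v} //
            ∃ ψ : Fin (s + 1) → ℝ,
              ψ 0 = φu ∧ ψ (Fin.last s) = φv ∧
              (∀ i : Fin s,
                |ψ i.succ - ψ i.castSucc| =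
                  |pathVert u v s (fun j => (g j : ℝ)) i.succ -
                    pathVert u v s (fun j => (g j : ℝ)) i.castSucc|) ∧
              ¬ ∃ c : ℝ,
                  (∀ i : Fin (s + 1), ψ i = pathVert u v s (fun j => (g j : ℝ)) i + c) ∨
                  (∀ i : Fin (s + 1), ψ i = c - pathVert u v s (fun j => (g j : ℝ)) i)} : ℝ)
          ≤ (Nat.card (Fin (s - 1) ↪ {x : ℝ // x ∈ V ∧ x ≠ u ∧ x ≠ v}) : ℝ)
              / Real.sqrt n := by
  refine ⟨0, fun n _ V hV u v _ _ φu φv _ s hs hlog => ?_⟩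
  obtain ⟨t, rfl⟩ | rfl : (∃ t, s = t + 2) ∨ s = 1 := by
    rcases Nat.lt_or_ge s 2 with h | h
    · exact Or.inr (by omega)
    · exact Or.inl ⟨s - 2, by omega⟩
  · have hn : (0 : ℝ) < n :=
      Nat.cast_pos.2 <| Nat.pos_of_ne_zero fun h0 => by simp [h0] at hlog; linarith
    rw [le_div_iff₀ (Real.sqrt_pos.2 hn), Nat.card_embedding_fin]
    refine le_trans ?_ (two_pow_mul_pow_mul_sqrt_le_descFactorial
      (hV ▸ V.card_le_natCard_subtype_ne_add_two u v) (four_pow_le_sqrt hn hlog))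
    gcongr
    exact_mod_cast card_hasNontrivialRigidExtension_pathVert_le Subtype.val_injective u v φu φv t
  · rw [Nat.card_eq_zero.2 (Or.inl ⟨fun g => ?_⟩), Nat.cast_zero]
    · positivity
    · obtain ⟨_, ⟨p, _⟩, _⟩ := HasNontrivialRigidExtension.exists_signChange g.2
      exact p.elim0
end

section
/- Let K be a graph with minimum degree at least 3 and k vertices such that (i) for disjoint sets one has the subadditivity bound Σᵢ|E(K[Vᵢ])| ≤ 1.078(Σᵢ|Vᵢ| − s) + o(k) for disjoint connected parts of size ≤ ck, and let Q' be a collection of m disjoint vertex subsets each of size at most ck. Then the number of edges with exactly one endpoint in some member of Q' is at least ((3 − 2·1.078)/2)·Σ_{U∈Q'}|U| + 1.078·m + o(k), and in particular at least ((3 − 2·1.078)/2 + 1.078)·m + o(k). -/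
/-- The number of edges of `G` both of whose endpoints lie in `U`. -/
noncomputable def edgesIn {V : Type*} (G : SimpleGraph V) (U : Set V) : ℕ :=
  {e ∈ G.edgeSet | ∀ x ∈ e, x ∈ U}.ncard

set_option maxRecDepth 16000
set_option maxHeartbeats 1600000
/-- Let `K` be a graph on `k` vertices with minimum degree at least `3`, and let
`Q' = {W 0, ..., W (m-1)}` be disjoint (nonempty) vertex subsets each of size at most
`ck` satisfying the density bound `Σᵢ|E(K[Wᵢ])| ≤ 1.078(Σᵢ|Wᵢ| − m) + err`.  Then the
number of edges with exactly one endpoint in some member of `Q'` is at least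
`((3 − 2·1.078)/2)·Σᵢ|Wᵢ| + 1.078·m − err`, and in particular at least
`((3 − 2·1.078)/2 + 1.078)·m − err`. -/
theorem stmt_10 {V : Type*} [Fintype V] [DecidableEq V]
    (K : SimpleGraph V) [DecidableRel K.Adj]
    (k : ℕ) (hk : Fintype.card V = k)
    (hdeg : ∀ v : V, 3 ≤ K.degree v)
    (c : ℝ) (hc : 0 < c)
    (m : ℕ) (W : Fin m → Finset V)
    (hdisj : ∀ i j, i ≠ j → Disjoint (W i) (W j))
    (hne : ∀ i, (W i).Nonempty)
    (hsize : ∀ i, ((W i).card : ℝ) ≤ c * k)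
    (err : ℝ)
    (hsub : (∑ i, (edgesIn K (↑(W i) : Set V) : ℝ)) ≤
        1.078 * ((∑ i, ((W i).card : ℝ)) - m) + err) :
    ((3 - 2 * 1.078) / 2) * (∑ i, ((W i).card : ℝ)) + 1.078 * m - err ≤
        ({e ∈ K.edgeSet | ∃ i, ∃ a b : V, e = s(a, b) ∧ a ∈ W i ∧ b ∉ W i}.ncard : ℝ) ∧
    ((3 - 2 * 1.078) / 2 + 1.078) * m - err ≤
        ({e ∈ K.edgeSet | ∃ i, ∃ a b : V, e = s(a, b) ∧ a ∈ W i ∧ b ∉ W i}.ncard : ℝ) := by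
  -- decidability is available from the instances
  -- Notation
  set S : ℕ := ∑ i, (W i).card with hS
  -- Boundary edge finset
  set E4 : Finset (Sym2 V) :=
      K.edgeFinset.filter (fun e => ∃ i, ∃ a b : V, e = s(a, b) ∧ a ∈ W i ∧ b ∉ W i) with hE4def
  -- Internal edge finsets
  set Int : Fin m → Finset (Sym2 V) :=
      fun i => K.edgeFinset.filter (fun e => ∀ x ∈ e, x ∈ W i) with hIntdef
  -- the target ncard equals E4.card
  have hE4card : ({e ∈ K.edgeSet | ∃ i, ∃ a b : V, e = s(a, b) ∧ a ∈ W i ∧ b ∉ W i}.ncard : ℕ)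
      = E4.card := by
    rw [← Set.ncard_coe_finset]
    congr 1
    ext e
    simp [hE4def, Set.mem_setOf_eq]
  -- edgesIn equals Int card
  have hIntcard : ∀ i, edgesIn K (↑(W i) : Set V) = (Int i).card := by
    intro i
    rw [edgesIn, ← Set.ncard_coe_finset]
    congr 1
    ext e
    simp [hIntdef, Set.mem_setOf_eq]
  -- degree sum as edge-count
  have hdeg_eq : ∀ i, ∑ v ∈ W i, K.degree v
      = ∑ e ∈ K.edgeFinset, ((W i).filter (fun x => x ∈ e)).card := by
    intro i
    have h1 : ∀ v : V, K.degree v = (K.edgeFinset.filter (fun e => v ∈ e)).card := by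
      intro v
      rw [← SimpleGraph.card_incidenceFinset_eq_degree]
      congr 1
      ext e
      simp [SimpleGraph.mem_incidenceFinset, SimpleGraph.incidenceSet]
    simp only [h1, Finset.card_filter]
    exact Finset.sum_comm
  -- each vertex is in at most one W i
  have atmost : ∀ a : V, (∑ i, (if a ∈ W i then (1:ℕ) else 0)) ≤ 1 := by
    intro a
    have h1 : (∑ i, if a ∈ W i then (1:ℕ) else 0)
        = (Finset.univ.filter (fun i => a ∈ W i)).card := by
      rw [Finset.card_filter]
    rw [h1, Finset.card_le_one]
    intro i hi j hj
    by_contra hij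
    simp only [Finset.mem_filter] at hi hj
    exact (Finset.disjoint_left.mp (hdisj i j hij)) hi.2 hj.2
  -- card of filter over a pair edge
  have pairCard : ∀ (i : Fin m) (a b : V), a ≠ b →
      ((W i).filter (fun x => x ∈ (s(a,b) : Sym2 V))).card
        = (if a ∈ W i then 1 else 0) + (if b ∈ W i then 1 else 0) := by
    intro i a b hab
    have h1 : (W i).filter (fun x => x ∈ (s(a,b) : Sym2 V))
        = ({a, b} : Finset V).filter (fun x => x ∈ W i) := by
      ext x
      simp only [Finset.mem_filter, Sym2.mem_iff, Finset.mem_insert, Finset.mem_singleton]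
      tauto
    rw [h1]
    by_cases ha : a ∈ W i <;> by_cases hb : b ∈ W i <;>
      simp [Finset.filter_insert, Finset.filter_singleton, ha, hb, hab]
  -- key per-edge inequality
  have key : ∀ e ∈ K.edgeFinset,
      (∑ i, ((W i).filter (fun x => x ∈ e)).card) ≤
        2 * (∑ i, if (∀ x ∈ e, x ∈ W i) then (1:ℕ) else 0) +
        2 * (if (∃ i, ∃ a b : V, e = s(a, b) ∧ a ∈ W i ∧ b ∉ W i) then (1:ℕ) else 0) := by
    intro e
    refine Sym2.ind (fun a b he => ?_) e
    have hadj : K.Adj a b := SimpleGraph.mem_edgeFinset.mp he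
    have hab : a ≠ b := hadj.ne
    have hint : ∀ i : Fin m, (∀ x ∈ (s(a,b) : Sym2 V), x ∈ W i) ↔ (a ∈ W i ∧ b ∈ W i) := by
      intro i
      constructor
      · intro h
        exact ⟨h a (by simp), h b (by simp)⟩
      · rintro ⟨h1, h2⟩ x hx
        rcases Sym2.mem_iff.mp hx with rfl | rfl <;> assumption
    have hsum2 : (∑ i, ((W i).filter (fun x => x ∈ (s(a,b) : Sym2 V))).card) ≤ 2 := by
      calc (∑ i, ((W i).filter (fun x => x ∈ (s(a,b) : Sym2 V))).card)
          = (∑ i, (if a ∈ W i then (1:ℕ) else 0)) + (∑ i, (if b ∈ W i then (1:ℕ) else 0)) := by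
            rw [← Finset.sum_add_distrib]
            exact Finset.sum_congr rfl fun i _ => pairCard i a b hab
        _ ≤ 1 + 1 := Nat.add_le_add (atmost a) (atmost b)
        _ = 2 := rfl
    by_cases hA : ∃ i, a ∈ W i ∧ b ∈ W i
    · obtain ⟨i0, hi0⟩ := hA
      have h1 : (1:ℕ) ≤ ∑ i, if (∀ x ∈ (s(a,b) : Sym2 V), x ∈ W i) then (1:ℕ) else 0 := by
        have := Finset.single_le_sum
          (f := fun i => if (∀ x ∈ (s(a,b) : Sym2 V), x ∈ W i) then (1:ℕ) else 0)
          (fun i _ => Nat.zero_le _) (Finset.mem_univ i0)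
        simpa [hint i0, hi0.1, hi0.2] using this
      omega
    · by_cases hB : ∃ i, a ∈ W i ∨ b ∈ W i
      · have hbound : ∃ i, ∃ x y : V, (s(a,b) : Sym2 V) = s(x, y) ∧ x ∈ W i ∧ y ∉ W i := by
          obtain ⟨i, hi⟩ := hB
          rcases hi with ha | hb
          · exact ⟨i, a, b, rfl, ha, fun hb => hA ⟨i, ha, hb⟩⟩
          · exact ⟨i, b, a, Sym2.eq_swap, hb, fun ha => hA ⟨i, ha, hb⟩⟩
        rw [if_pos hbound]
        omega
      · push_neg at hB
        have h0 : (∑ i, ((W i).filter (fun x => x ∈ (s(a,b) : Sym2 V))).card) = 0 := by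
          refine Finset.sum_eq_zero fun i _ => ?_
          rw [pairCard i a b hab]
          simp [(hB i).1, (hB i).2]
        omega
  -- main counting inequality
  have main : 3 * S ≤ 2 * (∑ i, (Int i).card) + 2 * E4.card := by
    have step1 : 3 * S ≤ ∑ i, ∑ v ∈ W i, K.degree v := by
      rw [hS, Finset.mul_sum]
      exact Finset.sum_le_sum fun i _ => by
        calc 3 * (W i).card = ∑ _v ∈ W i, 3 := by simp [Nat.mul_comm]
          _ ≤ ∑ v ∈ W i, K.degree v := Finset.sum_le_sum fun v _ => hdeg v
    have step2 : (∑ i, ∑ v ∈ W i, K.degree v)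
        = ∑ e ∈ K.edgeFinset, ∑ i, ((W i).filter (fun x => x ∈ e)).card := by
      rw [Finset.sum_comm]
      exact Finset.sum_congr rfl fun i _ => hdeg_eq i
    have step3 : (∑ e ∈ K.edgeFinset, ∑ i, ((W i).filter (fun x => x ∈ e)).card)
        ≤ 2 * (∑ i, (Int i).card) + 2 * E4.card := by
      calc (∑ e ∈ K.edgeFinset, ∑ i, ((W i).filter (fun x => x ∈ e)).card)
          ≤ ∑ e ∈ K.edgeFinset,
              (2 * (∑ i, if (∀ x ∈ e, x ∈ W i) then (1:ℕ) else 0) +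
               2 * (if (∃ i, ∃ a b : V, e = s(a, b) ∧ a ∈ W i ∧ b ∉ W i) then (1:ℕ) else 0)) :=
            Finset.sum_le_sum key
        _ = 2 * (∑ e ∈ K.edgeFinset, ∑ i, if (∀ x ∈ e, x ∈ W i) then (1:ℕ) else 0) +
            2 * (∑ e ∈ K.edgeFinset,
              if (∃ i, ∃ a b : V, e = s(a, b) ∧ a ∈ W i ∧ b ∉ W i) then (1:ℕ) else 0) := by
            rw [Finset.sum_add_distrib, Finset.mul_sum, Finset.mul_sum]
        _ = 2 * (∑ i, (Int i).card) + 2 * E4.card := by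
            congr 1
            · congr 1
              rw [Finset.sum_comm]
              refine Finset.sum_congr rfl fun i _ => ?_
              simp only [hIntdef]
              exact (Finset.card_filter _ _).symm
            · congr 1
              simp only [hE4def]
              exact (Finset.card_filter _ _).symm
    calc 3 * S ≤ ∑ i, ∑ v ∈ W i, K.degree v := step1
      _ = _ := step2
      _ ≤ _ := step3
  -- pass to the reals
  have hSum : (∑ i, ((W i).card : ℝ)) = (S : ℝ) := by
    rw [hS]; push_cast; ring
  have hT : (∑ i, (edgesIn K (↑(W i) : Set V) : ℝ)) = ((∑ i, (Int i).card : ℕ) : ℝ) := by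
    push_cast
    exact Finset.sum_congr rfl fun i _ => by rw [hIntcard i]
  have mainR : 3 * (S : ℝ) ≤ 2 * ((∑ i, (Int i).card : ℕ) : ℝ) + 2 * (E4.card : ℝ) := by
    exact_mod_cast main
  have hsubR : ((∑ i, (Int i).card : ℕ) : ℝ) ≤ 1.078 * ((S : ℝ) - m) + err := by
    rw [← hT, ← hSum]; exact hsub
  have hmS : (m : ℝ) ≤ (S : ℝ) := by
    have : m ≤ S := by
      calc m = ∑ _i : Fin m, 1 := by simp
        _ ≤ ∑ i, (W i).card := Finset.sum_le_sum fun i _ => (hne i).card_pos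
    exact_mod_cast this
  have hgoal1 : ((3 - 2 * 1.078) / 2) * (∑ i, ((W i).card : ℝ)) + 1.078 * m - err
      ≤ (E4.card : ℝ) := by
    rw [hSum]; linarith
  have hE4R : ({e ∈ K.edgeSet | ∃ i, ∃ a b : V, e = s(a, b) ∧ a ∈ W i ∧ b ∉ W i}.ncard : ℝ)
      = (E4.card : ℝ) := by rw [hE4card]
  constructor
  · rw [hE4R]; exact hgoal1
  · rw [hE4R]
    have hc2 : (0:ℝ) ≤ (3 - 2 * 1.078) / 2 := by norm_num
    have := mul_le_mul_of_nonneg_left hmS hc2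
    rw [hSum] at hgoal1
    linarith
end

section
/- Let V ⊆ ℝ be a finite set that is linearly independent over ℚ, and let G = (V, E) be a graph on V. If S ⊆ V has exactly one neighbour v in V ∖ S (i.e., every edge leaving S ends at v), and S ∪ {v} ≠ V, then the map reflecting all points of S about v and fixing all other points is a G-rigid map; consequently every reconstructible subset of size at least 3 is contained in a 2-connected subgraph of G. -/
open SimpleGraph

section GraphLemmas

variable {α : Type*} {G : SimpleGraph α}

/-- Connectivity of two vertices through a walk whose support stays in `D`. -/
def ConnOn (G : SimpleGraph α) (D : Set α) (a b : α) : Prop :=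
  ∃ p : G.Walk a b, ∀ z ∈ p.support, z ∈ D

lemma connOn_refl {D : Set α} {a : α} (ha : a ∈ D) : ConnOn G D a a :=
  ⟨Walk.nil, by simp [ha]⟩

lemma connOn_mem_right {D : Set α} {a b : α} (h : ConnOn G D a b) : b ∈ D := by
  obtain ⟨p, hp⟩ := h; exact hp b (Walk.end_mem_support _)

lemma connOn_symm {D : Set α} {a b : α} (h : ConnOn G D a b) : ConnOn G D b a := by
  obtain ⟨p, hp⟩ := h
  exact ⟨p.reverse, fun z hz => hp z (by simpa [Walk.support_reverse] using hz)⟩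

lemma connOn_trans {D : Set α} {a b c : α} (h : ConnOn G D a b) (h' : ConnOn G D b c) :
    ConnOn G D a c := by
  obtain ⟨p, hp⟩ := h; obtain ⟨q, hq⟩ := h'
  refine ⟨p.append q, fun z hz => ?_⟩
  rw [Walk.support_append, List.mem_append] at hz
  rcases hz with hz | hz
  · exact hp z hz
  · exact hq z (List.mem_of_mem_tail hz)

lemma connOn_cons {D : Set α} {a b c : α} (ha : a ∈ D) (hadj : G.Adj a b)
    (h : ConnOn G D b c) : ConnOn G D a c := by
  obtain ⟨p, hp⟩ := h
  refine ⟨Walk.cons hadj p, fun z hz => ?_⟩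
  rw [Walk.support_cons, List.mem_cons] at hz
  rcases hz with rfl | hz
  · exact ha
  · exact hp z hz

lemma connOn_adj {D : Set α} {a b y : α} (h : ConnOn G D a b) (hadj : G.Adj b y)
    (hy : y ∈ D) : ConnOn G D a y :=
  connOn_trans h ⟨Walk.cons hadj Walk.nil, by
    intro z hz; simp [Walk.support_cons] at hz
    rcases hz with rfl | rfl
    · exact connOn_mem_right h
    · exact hy⟩

/-- Walk surgery: if every edge from `C \ {w0}` inside `B` stays in `C`, then a walk
inside `B` ending in `C` can be replaced by one inside `C` (starting at `s` or `w0`). -/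
lemma surgery {C B : Set α} {w0 : α} (hw0 : w0 ∈ C)
    (hcl : ∀ z ∈ C, z ≠ w0 → ∀ y, G.Adj z y → y ∈ B → y ∈ C) :
    ∀ {s t : α} (p : G.Walk s t), (∀ z ∈ p.support, z ∈ B) → t ∈ C →
      (s ∈ C ∧ ConnOn G C s t) ∨ (s ∉ C ∧ ConnOn G C w0 t) := by
  intro s t p
  induction p with
  | nil =>
    intro _ ht
    exact Or.inl ⟨ht, connOn_refl ht⟩
  | @cons s y t h p ih =>
    intro hp ht
    have hyB : y ∈ B := hp y (by simp)
    have hsB : s ∈ B := hp s (by simp)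
    have hp' : ∀ z ∈ p.support, z ∈ B := fun z hz => hp z (by simp [hz])
    rcases ih hp' ht with ⟨hyC, hcy⟩ | ⟨hyC, hcw⟩
    · by_cases hsC : s ∈ C
      · exact Or.inl ⟨hsC, connOn_cons hsC h hcy⟩
      · have hyw : y = w0 := by
          by_contra hne
          exact hsC (hcl y hyC hne s h.symm hsB)
        subst hyw
        exact Or.inr ⟨hsC, hcy⟩
    · by_cases hsC : s ∈ C
      · by_cases hsw : s = w0
        · subst hsw; exact Or.inl ⟨hsC, hcw⟩
        · exact absurd (hcl s hsC hsw y h hyB) hyC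
      · exact Or.inr ⟨hsC, hcw⟩

lemma connOn_surgery {C B : Set α} {w0 : α} (hw0 : w0 ∈ C)
    (hcl : ∀ z ∈ C, z ≠ w0 → ∀ y, G.Adj z y → y ∈ B → y ∈ C)
    {s t : α} (h : ConnOn G B s t) (hs : s ∈ C) (ht : t ∈ C) : ConnOn G C s t := by
  obtain ⟨p, hp⟩ := h
  rcases surgery hw0 hcl p hp ht with ⟨_, hc⟩ | ⟨hn, _⟩
  · exact hc
  · exact absurd hs hn

lemma walk_induce {D : Set α} :
    ∀ {a b : α} (p : G.Walk a b), (∀ z ∈ p.support, z ∈ D) →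
      ∀ (ha : a ∈ D) (hb : b ∈ D), (G.induce D).Reachable ⟨a, ha⟩ ⟨b, hb⟩ := by
  intro a b p
  induction p with
  | nil => intro _ ha hb; exact Reachable.refl _
  | @cons a y b h p ih =>
    intro hp ha hb
    have hy : y ∈ D := hp y (by simp)
    have hadj : (G.induce D).Adj ⟨a, ha⟩ ⟨y, hy⟩ := by
      simp [h]
    exact (hadj.reachable).trans (ih (fun z hz => hp z (by simp [hz])) hy hb)

lemma connOn_connected {D : Set α} (hne : D.Nonempty)
    (h : ∀ a ∈ D, ∀ b ∈ D, ConnOn G D a b) : (G.induce D).Connected := by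
  rw [connected_iff]
  refine ⟨?_, ⟨⟨hne.choose, hne.choose_spec⟩⟩⟩
  rintro ⟨a, ha⟩ ⟨b, hb⟩
  obtain ⟨p, hp⟩ := h a ha b hb
  exact walk_induce p hp ha hb

lemma exists_third [Finite α] {U : Set α} (h3 : 3 ≤ U.ncard) (a b : α) :
    ∃ c ∈ U, c ≠ a ∧ c ≠ b := by
  by_contra hcon
  push_neg at hcon
  have hsub : U ⊆ {a, b} := by
    intro c hc
    by_cases hca : c = a
    · exact Or.inl hca
    · exact Or.inr (hcon c hc hca)
  have h1 := Set.ncard_le_ncard hsub (Set.toFinite _)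
  have h2 : ({a, b} : Set α).ncard ≤ 2 := by
    apply (Set.ncard_insert_le _ _).trans
    simp [Set.ncard_singleton]
  omega

/-- The main graph-theoretic induction: if all pairs of `U` stay connected after deleting any
single vertex of the ambient set `A`, then `U` lies in a `W` inducing a 2-connected graph. -/
lemma main_ind [Finite α] (G : SimpleGraph α) (U : Set α) (hU3 : 3 ≤ U.ncard) :
    ∀ (n : ℕ) (A : Set α), A.ncard ≤ n → U ⊆ A →
      (∀ u ∈ U, ∀ u' ∈ U, ConnOn G A u u') →
      (∀ x : α, ∀ u ∈ U, ∀ u' ∈ U, u ≠ x → u' ≠ x → ConnOn G (A \ {x}) u u') →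
      ∃ W : Set α, U ⊆ W ∧
        ∀ w ∈ W, ∀ a ∈ W \ {w}, ∀ b ∈ W \ {w}, ConnOn G (W \ {w}) a b := by
  intro n
  induction n with
  | zero =>
    intro A hA hUA _ _
    exfalso
    have := Set.ncard_le_ncard hUA (Set.toFinite A)
    omega
  | succ n ih =>
    intro A hA hUA h0 h1
    by_cases hterm : ∀ w ∈ A, ∀ a ∈ A \ {w}, ∀ b ∈ A \ {w}, ConnOn G (A \ {w}) a b
    · exact ⟨A, hUA, hterm⟩
    push_neg at hterm
    obtain ⟨w0, hw0A, a, ha, b, hb, hnc⟩ := hterm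
    obtain ⟨u1, hu1U, hu1w, -⟩ := exists_third hU3 w0 w0
    set K : Set α := {z | ConnOn G (A \ {w0}) u1 z} with hK
    have hKsub : K ⊆ A \ {w0} := fun z hz => connOn_mem_right hz
    have hw0K : w0 ∉ K := fun h => (hKsub h).2 rfl
    set A' : Set α := insert w0 K with hA'
    have hA'sub : A' ⊆ A := by
      intro z hz
      rcases hz with rfl | hz
      · exact hw0A
      · exact (hKsub hz).1
    have hclK : ∀ z ∈ K, ∀ y, G.Adj z y → y ∈ A → y ∈ A' := by
      intro z hz y hadj hyA
      by_cases hyw : y = w0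
      · exact Or.inl hyw
      · exact Or.inr (connOn_adj hz hadj ⟨hyA, hyw⟩)
    have hstrict : A'.ncard < A.ncard := by
      have : ¬ (a ∈ K ∧ b ∈ K) := by
        rintro ⟨haK, hbK⟩
        exact hnc (connOn_trans (connOn_symm haK) hbK)
      have hc : ∃ c, c ∈ A ∧ c ∉ A' := by
        rcases not_and_or.mp this with hn | hn
        · exact ⟨a, ha.1, fun hmem => by
            rcases hmem with rfl | hmem
            · exact ha.2 rfl
            · exact hn hmem⟩
        · exact ⟨b, hb.1, fun hmem => by
            rcases hmem with rfl | hmem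
            · exact hb.2 rfl
            · exact hn hmem⟩
      obtain ⟨c, hcA, hcA'⟩ := hc
      exact Set.ncard_lt_ncard ⟨hA'sub, fun hs => hcA' (hs hcA)⟩ (Set.toFinite A)
    have hUA' : U ⊆ A' := by
      intro u hu
      by_cases huw : u = w0
      · exact Or.inl huw
      · exact Or.inr (h1 w0 u1 hu1U u hu hu1w huw)
    have h0' : ∀ u ∈ U, ∀ u' ∈ U, ConnOn G A' u u' := by
      intro u hu u' hu'
      refine connOn_surgery (w0 := w0) (Or.inl rfl) ?_ (h0 u hu u' hu') (hUA' hu) (hUA' hu')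
      intro z hz hzw y hadj hyA
      rcases hz with rfl | hz
      · exact absurd rfl hzw
      · exact hclK z hz y hadj hyA
    have h1' : ∀ x : α, ∀ u ∈ U, ∀ u' ∈ U, u ≠ x → u' ≠ x → ConnOn G (A' \ {x}) u u' := by
      intro x u hu u' hu' hux hu'x
      by_cases hxw : x = w0
      · subst hxw
        have hKeq : A' \ {x} = K := by
          ext z
          simp only [hA', Set.mem_diff, Set.mem_insert_iff, Set.mem_singleton_iff]
          constructor
          · rintro ⟨rfl | hz, hzx⟩
            · exact absurd rfl hzx
            · exact hz
          · intro hz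
            exact ⟨Or.inr hz, fun h => hw0K (h ▸ hz)⟩
        rw [hKeq]
        have huK : u ∈ K := h1 x u1 hu1U u hu hu1w hux
        have hu'K : u' ∈ K := h1 x u1 hu1U u' hu' hu1w hu'x
        have hu1K : u1 ∈ K := connOn_refl ⟨hUA hu1U, hu1w⟩
        refine connOn_surgery (w0 := u1) hu1K ?_ (h1 x u hu u' hu' hux hu'x) huK hu'K
        intro z hz _ y hadj hy
        exact connOn_adj hz hadj hy
      · have hw0C : w0 ∈ A' \ {x} := ⟨Or.inl rfl, fun h => hxw (Eq.symm h)⟩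
        refine connOn_surgery (w0 := w0) hw0C ?_ (h1 x u hu u' hu' hux hu'x)
          ⟨hUA' hu, hux⟩ ⟨hUA' hu', hu'x⟩
        intro z hz hzw y hadj hy
        have hzK : z ∈ K := by
          rcases hz.1 with rfl | h
          · exact absurd rfl hzw
          · exact h
        rcases hclK z hzK y hadj hy.1 with h | h
        · exact ⟨Or.inl h, hy.2⟩
        · exact ⟨Or.inr h, hy.2⟩
    exact ih A' (by omega) hUA' h0' h1'

end GraphLemmas

section RealLemmas

variable {V : Finset ℝ}

lemma key_lin (hli : LinearIndependent ℚ (fun v : V => (v : ℝ))) :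
    ∀ a b c : V, (a : ℝ) + (b : ℝ) = 2 * (c : ℝ) → a = c ∧ b = c := by
  intro a b c h
  by_cases hab : a = b
  · subst hab
    have : a = c := Subtype.ext (by linarith)
    exact ⟨this, this⟩
  by_cases hac : a = c
  · subst hac
    exact ⟨rfl, Subtype.ext (by linarith)⟩
  by_cases hbc : b = c
  · subst hbc
    exact ⟨Subtype.ext (by linarith), rfl⟩
  exfalso
  have hba : ¬ b = a := fun e => hab e.symm
  have hca : ¬ c = a := fun e => hac e.symm
  have hcb : ¬ c = b := fun e => hbc e.symm
  have hsum : ∑ i ∈ ({a, b, c} : Finset V),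
      (if i = a then (1:ℚ) else if i = b then 1 else -2) • ((i : V) : ℝ) = 0 := by
    rw [Finset.sum_insert (by simp [hab, hac]), Finset.sum_insert (by simp [hbc]),
      Finset.sum_singleton]
    simp only [if_pos rfl, if_neg hba, if_neg hca, if_neg hcb]
    rw [Rat.smul_def, Rat.smul_def, Rat.smul_def]
    push_cast
    linarith
  have := linearIndependent_iff'.mp hli ({a, b, c} : Finset V)
    (fun i => if i = a then (1:ℚ) else if i = b then 1 else -2) hsum a (by simp)
  simp at this

lemma reflect_rigid (hli : LinearIndependent ℚ (fun v : V => (v : ℝ)))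
    (G : SimpleGraph V) (B : V → Prop) [DecidablePred B] (x : V)
    (hcl : ∀ z : V, B z → ∀ y : V, ¬ B y → G.Adj z y → y = x) :
    Function.Injective (fun w : V => if B w then 2 * (x : ℝ) - w else (w : ℝ)) ∧
      ∀ a b : V, G.Adj a b →
        |(if B a then 2 * (x : ℝ) - a else (a : ℝ)) -
            (if B b then 2 * (x : ℝ) - b else (b : ℝ))| = |(a : ℝ) - (b : ℝ)| := by
  constructor
  · intro s t h
    simp only at h
    by_cases hs : B s <;> by_cases ht : B t
    · rw [if_pos hs, if_pos ht] at h
      exact Subtype.ext (by linarith)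
    · rw [if_pos hs, if_neg ht] at h
      have := key_lin hli s t x (by linarith)
      rw [this.1, this.2]
    · rw [if_neg hs, if_pos ht] at h
      have := key_lin hli t s x (by linarith)
      rw [this.1, this.2]
    · rw [if_neg hs, if_neg ht] at h
      exact Subtype.ext h
  · intro a b hadj
    by_cases ha : B a <;> by_cases hb : B b
    · rw [if_pos ha, if_pos hb]
      rw [show 2 * (x:ℝ) - a - (2 * (x:ℝ) - b) = -((a:ℝ) - b) by ring, abs_neg]
    · rw [if_pos ha, if_neg hb]
      have : b = x := hcl a ha b hb hadj
      subst this
      rw [show 2 * (b:ℝ) - a - b = -((a:ℝ) - b) by ring, abs_neg]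
    · rw [if_neg ha, if_pos hb]
      have : a = x := hcl b hb a ha hadj.symm
      subst this
      rw [show (a:ℝ) - (2 * (a:ℝ) - b) = -((a:ℝ) - b) by ring, abs_neg]
    · rw [if_neg ha, if_neg hb]

lemma recon_contra (hli : LinearIndependent ℚ (fun v : V => (v : ℝ)))
    (G : SimpleGraph V) (U : Set V)
    (hrec : ∀ φ : V → ℝ, Function.Injective φ →
        (∀ x y : V, G.Adj x y → |φ x - φ y| = |(x : ℝ) - (y : ℝ)|) →
        ∀ x ∈ U, ∀ y ∈ U, |φ x - φ y| = |(x : ℝ) - (y : ℝ)|)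
    (B : Set V) (x : V)
    (hcl : ∀ z ∈ B, ∀ y : V, y ∉ B → G.Adj z y → y = x)
    (u1 u2 : V) (h1 : u1 ∈ U) (h2 : u2 ∈ U) (hB1 : u1 ∈ B) (hB2 : u2 ∉ B)
    (hx1 : u1 ≠ x) (hx2 : u2 ≠ x) : False := by
  classical
  obtain ⟨hinj, hrig⟩ := reflect_rigid hli G (· ∈ B) x hcl
  have h := hrec _ hinj hrig u1 h1 u2 h2
  have h' : |2 * (x:ℝ) - u1 - u2| = |(u1:ℝ) - u2| := by
    simpa [hB1, hB2] using h
  rcases abs_eq_abs.mp h' with h'' | h''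
  · exact hx1 (Subtype.ext (by linarith))
  · exact hx2 (Subtype.ext (by linarith))

end RealLemmas

/-- Let `V ⊆ ℝ` be finite and linearly independent over `ℚ`, and `G` a graph on `V`.
If every edge leaving `S ⊆ V` ends at the single vertex `v ∉ S`, and `S ∪ {v} ≠ V`,
then reflecting `S` about `v` and fixing everything else is a `G`-rigid map;
consequently every reconstructible subset of size at least `3` is contained in a set
inducing a 2-connected subgraph of `G`. -/
theorem stmt_13 (V : Finset ℝ)
    (hli : LinearIndependent ℚ (fun v : V => (v : ℝ)))
    (G : SimpleGraph V) (S : Finset V) (v : V) (hv : v ∉ S)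
    (hnbr : ∀ a ∈ S, ∀ b : V, b ∉ S → G.Adj a b → b = v)
    (hvn : ∃ a ∈ S, G.Adj a v)
    (hne : insert v S ≠ (Finset.univ : Finset V)) :
    (Function.Injective (fun w : V => if w ∈ S then 2 * (v : ℝ) - w else (w : ℝ)) ∧
      ∀ a b : V, G.Adj a b →
        |(if a ∈ S then 2 * (v : ℝ) - a else (a : ℝ)) -
            (if b ∈ S then 2 * (v : ℝ) - b else (b : ℝ))| = |(a : ℝ) - (b : ℝ)|) ∧
    (∀ U : Set V,
        (∀ φ : V → ℝ, Function.Injective φ →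
            (∀ x y : V, G.Adj x y → |φ x - φ y| = |(x : ℝ) - (y : ℝ)|) →
            ∀ x ∈ U, ∀ y ∈ U, |φ x - φ y| = |(x : ℝ) - (y : ℝ)|) →
        3 ≤ U.ncard →
        ∃ W : Set V, U ⊆ W ∧ 3 ≤ W.ncard ∧
          ∀ w ∈ W, (G.induce (W \ {w})).Connected) := by
  constructor
  · exact reflect_rigid hli G (· ∈ S) v (fun z hz y hy hadj => hnbr z hz y hy hadj)
  · intro U hrec hU3
    -- every pair of `U` is connected in `G`
    have h0top : ∀ u ∈ U, ∀ u' ∈ U, ConnOn G Set.univ u u' := by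
      intro u hu u' hu'
      by_cases hr : G.Reachable u u'
      · obtain ⟨p⟩ := hr
        exact ⟨p, fun z _ => Set.mem_univ z⟩
      · exfalso
        obtain ⟨u'', hu''U, hu''u, hu''u'⟩ := exists_third hU3 u u'
        refine recon_contra hli G U hrec {z | G.Reachable u z} u'' ?_ u u' hu hu'
          (Reachable.refl u) hr (fun h => hu''u h.symm) (fun h => hu''u' h.symm)
        intro z hz y hy hadj
        exact (hy (hz.trans hadj.reachable)).elim
    -- every pair of `U` stays connected after deleting any other vertex
    have h1top : ∀ x : V, ∀ u ∈ U, ∀ u' ∈ U, u ≠ x → u' ≠ x →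
        ConnOn G (Set.univ \ {x}) u u' := by
      intro x u hu u' hu' hux hu'x
      by_cases hc : ConnOn G (Set.univ \ {x}) u u'
      · exact hc
      · exfalso
        refine recon_contra hli G U hrec {z | ConnOn G (Set.univ \ {x}) u z} x ?_ u u' hu hu'
          (connOn_refl ⟨Set.mem_univ u, hux⟩) hc hux hu'x
        intro z hz y hy hadj
        by_contra hyx
        exact hy (connOn_adj hz hadj ⟨Set.mem_univ y, hyx⟩)
    obtain ⟨W, hUW, hW⟩ := main_ind G U hU3 (Set.univ : Set V).ncard Set.univ le_rfl
      (Set.subset_univ U) h0top h1top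
    refine ⟨W, hUW, le_trans hU3 (Set.ncard_le_ncard hUW (Set.toFinite W)), ?_⟩
    intro w hw
    obtain ⟨c, hcU, hcw, -⟩ := exists_third hU3 w w
    exact connOn_connected ⟨c, hUW hcU, hcw⟩ (hW w hw)
end

section
/- Let ν ∈ (0,1), let E be a finite set of size M, and suppose each element e ∈ E independently carries a Geometric(ν) weight w_e (with support the positive integers). Let α = α(M) → 0. Then with probability 1 − o(1), every subset F ⊆ E with |F| ≤ α²M satisfies Σ_{e∈F} w_e ≤ α·M/ν. -/
/-!
Truncate every weight at `T ≈ 1 / (2αν)`: for any `F`, `Σ_{e∈F} w_e ≤ |F| T + Σ_{e∈E} (w_e - T)⁺`,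
and `|F| T ≤ αM / (2ν)` when `|F| ≤ α²M`. A heavy `F` therefore forces
`Σ_e (w_e - T)⁺ > αM / (2ν)`, and since `𝔼 (w_e - T)⁺ = (1 - ν)^T / ν`, Markov's inequality bounds
the probability of this by `2 (1 - ν)^T / α ≤ 4ν (T + 1) (1 - ν)^T`, which tends to `0` as `T → ∞`.
-/

open MeasureTheory ProbabilityTheory Filter Topology
open scoped ENNReal

theorem hasSum_geometric_tail {q : ℝ} (hq0 : 0 ≤ q) (hq1 : q < 1) (t : ℕ) :
    HasSum (fun j : ℕ => q ^ (t + j)) (q ^ t / (1 - q)) := by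
  simpa only [pow_add, div_eq_mul_inv] using (hasSum_geometric_of_lt_one hq0 hq1).mul_left (q ^ t)

theorem tendsto_natCast_add_one_mul_pow_atTop_nhds_zero {q : ℝ} (hq0 : 0 ≤ q) (hq1 : q < 1) :
    Tendsto (fun n : ℕ => ((n : ℝ) + 1) * q ^ n) atTop (𝓝 0) := by
  simpa only [add_mul, one_mul, add_zero] using
    (tendsto_self_mul_const_pow_of_lt_one hq0 hq1).add
      (tendsto_pow_atTop_nhds_zero_of_lt_one hq0 hq1)

theorem natCast_tsub_eq_tsum_indicator (a T : ℕ) :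
    ((a - T : ℕ) : ℝ≥0∞) = ∑' s : ℕ, (Set.Ioi (T + s)).indicator 1 a := by
  rw [tsum_eq_sum (s := Finset.range (a - T)) fun s hs => by
    simp only [Finset.mem_range] at hs
    exact Set.indicator_of_notMem (by simp only [Set.mem_Ioi]; omega) _]
  rw [Finset.sum_congr rfl fun s hs => Set.indicator_of_mem (by simp at hs ⊢; omega) _]
  simp

theorem Finset.sum_le_card_mul_add_sum_tsub {ι : Type*} [Fintype ι] (f : ι → ℕ) (F : Finset ι)
    (T : ℕ) : ∑ e ∈ F, f e ≤ F.card * T + ∑ e, (f e - T) :=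
  calc ∑ e ∈ F, f e ≤ ∑ e ∈ F, (T + (f e - T)) := Finset.sum_le_sum fun e _ => by omega
    _ = F.card * T + ∑ e ∈ F, (f e - T) := by
      rw [Finset.sum_add_distrib, Finset.sum_const, smul_eq_mul]
    _ ≤ F.card * T + ∑ e, (f e - T) := by gcongr; exact F.subset_univ

section Geometric

variable {Ω : Type*} [MeasurableSpace Ω] {μ : Measure Ω}

theorem lintegral_natCast_tsub_eq_tsum {w : Ω → ℕ} (hw : Measurable w) (T : ℕ) :
    ∫⁻ ω, ((w ω - T : ℕ) : ℝ≥0∞) ∂μ = ∑' s : ℕ, μ {ω | T + s < w ω} := by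
  simp_rw [natCast_tsub_eq_tsum_indicator, ← Set.indicator_comp_right, Pi.one_comp]
  rw [lintegral_tsum fun s => (measurable_one.indicator (hw measurableSet_Ioi)).aemeasurable]
  exact tsum_congr fun s => lintegral_indicator_one (hw measurableSet_Ioi)

def HasGeometricLaw (w : Ω → ℕ) (ν : ℝ) (μ : Measure Ω) : Prop :=
  ∀ j : ℕ, 1 ≤ j → μ {ω | w ω = j} = ENNReal.ofReal (ν * (1 - ν) ^ (j - 1))

variable {ν : ℝ} {w : Ω → ℕ}

theorem HasGeometricLaw.measure_lt (hlaw : HasGeometricLaw w ν μ) (hν0 : 0 < ν) (hν1 : ν < 1)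
    (hw : Measurable w) (t : ℕ) : μ {ω | t < w ω} = ENNReal.ofReal ((1 - ν) ^ t) := by
  have hunion : {ω | t < w ω} = ⋃ j : ℕ, {ω | w ω = t + 1 + j} := by
    ext ω
    simp only [Set.mem_ofPred_eq, Set.mem_iUnion]
    exact ⟨fun h => ⟨w ω - (t + 1), by omega⟩, fun ⟨j, hj⟩ => by omega⟩
  have hdisj : Pairwise (Function.onFun Disjoint fun j : ℕ => {ω | w ω = t + 1 + j}) :=
    fun i j hij => Set.disjoint_left.2 fun ω (hi : _ = _) (hj : _ = _) => hij (by omega)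
  have hsum : HasSum (fun j : ℕ => ν * (1 - ν) ^ (t + j)) ((1 - ν) ^ t) := by
    have := (hasSum_geometric_tail (q := 1 - ν) (by linarith) (by linarith) t).mul_left ν
    rwa [sub_sub_cancel, mul_div_cancel₀ _ hν0.ne'] at this
  have hlaw' (j : ℕ) : μ {ω | w ω = t + 1 + j} = ENNReal.ofReal (ν * (1 - ν) ^ (t + j)) := by
    rw [hlaw _ (by omega), Nat.add_right_comm, Nat.add_sub_cancel]
  rw [hunion, measure_iUnion hdisj fun j => hw (measurableSet_singleton _), tsum_congr hlaw',
    ← ENNReal.ofReal_tsum_of_nonneg (fun j => by positivity) hsum.summable, hsum.tsum_eq]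

theorem HasGeometricLaw.lintegral_tsub (hlaw : HasGeometricLaw w ν μ) (hν0 : 0 < ν)
    (hν1 : ν < 1) (hw : Measurable w) (T : ℕ) :
    ∫⁻ ω, ((w ω - T : ℕ) : ℝ≥0∞) ∂μ = ENNReal.ofReal ((1 - ν) ^ T / ν) := by
  have hsum := hasSum_geometric_tail (q := 1 - ν) (by linarith) (by linarith) T
  rw [sub_sub_cancel] at hsum
  rw [lintegral_natCast_tsub_eq_tsum hw, tsum_congr fun s => hlaw.measure_lt hν0 hν1 hw _,
    ← ENNReal.ofReal_tsum_of_nonneg (fun s => pow_nonneg (by linarith) _) hsum.summable,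
    hsum.tsum_eq]

end Geometric

section HeavySubsets

variable {Ω ι : Type*} [MeasurableSpace Ω] {μ : Measure Ω} [Fintype ι] [Nonempty ι] {ν : ℝ}
  {w : ι → Ω → ℕ}

theorem measure_exists_heavy_finset_le (hν0 : 0 < ν) (hν1 : ν < 1)
    (hw : ∀ e, Measurable (w e)) (hlaw : ∀ e, HasGeometricLaw (w e) ν μ)
    {a : ℝ} (ha : 0 < a) {T : ℕ} (hT : 2 * a * ν * T ≤ 1) :
    μ {ω | ¬ ∀ F : Finset ι, (F.card : ℝ) ≤ a ^ 2 * Fintype.card ι →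
        ((∑ e ∈ F, w e ω : ℕ) : ℝ) ≤ a * Fintype.card ι / ν} ≤
      ENNReal.ofReal (2 * (1 - ν) ^ T / a) := by
  set n : ℝ := (Fintype.card ι : ℝ)
  have hn : 0 < n := by simp [n, Fintype.card_pos]
  set B := a * n / (2 * ν)
  have hB : 0 < B := by positivity
  set X : Ω → ℝ≥0∞ := fun ω => ∑ e, ((w e ω - T : ℕ) : ℝ≥0∞)
  have hX : Measurable X := by fun_prop
  have hbad : {ω | ¬ ∀ F : Finset ι, (F.card : ℝ) ≤ a ^ 2 * n →
      ((∑ e ∈ F, w e ω : ℕ) : ℝ) ≤ a * n / ν} ⊆ {ω | ENNReal.ofReal B ≤ X ω} := by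
    intro ω hω
    obtain ⟨F, hF, hheavy⟩ := not_forall₂.1 hω
    have hsplit : ((∑ e ∈ F, w e ω : ℕ) : ℝ) ≤ F.card * T + ∑ e, ((w e ω - T : ℕ) : ℝ) := by
      exact_mod_cast Finset.sum_le_card_mul_add_sum_tsub (w · ω) F T
    have hlight : (F.card : ℝ) * T ≤ B := calc
      (F.card : ℝ) * T ≤ a ^ 2 * n * T := by gcongr
      _ = B * (2 * a * ν * T) := by simp only [B]; field_simp
      _ ≤ B := mul_le_of_le_one_right hB.le hT
    have hB2 : a * n / ν = 2 * B := by simp only [B]; field_simp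
    show ENNReal.ofReal B ≤ X ω
    rw [show X ω = ENNReal.ofReal (∑ e, ((w e ω - T : ℕ) : ℝ)) by
      simp only [X, ← Nat.cast_sum, ENNReal.ofReal_natCast]]
    exact ENNReal.ofReal_le_ofReal (by linarith [not_le.1 hheavy])
  have hint : ∫⁻ ω, X ω ∂μ = Fintype.card ι * ENNReal.ofReal ((1 - ν) ^ T / ν) := by
    rw [lintegral_finsetSum _ fun e _ => by fun_prop]
    simp only [(hlaw _).lintegral_tsub hν0 hν1 (hw _), Finset.sum_const, Finset.card_univ,
      nsmul_eq_mul]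
  calc _ ≤ μ {ω | ENNReal.ofReal B ≤ X ω} := measure_mono hbad
    _ ≤ (∫⁻ ω, X ω ∂μ) / ENNReal.ofReal B :=
        meas_ge_le_lintegral_div hX.aemeasurable (by simpa using hB) ENNReal.ofReal_ne_top
    _ = ENNReal.ofReal (n * ((1 - ν) ^ T / ν) / B) := by
        rw [hint, ← ENNReal.ofReal_natCast, ← ENNReal.ofReal_mul (by positivity),
          ENNReal.ofReal_div_of_pos hB]
    _ = ENNReal.ofReal (2 * (1 - ν) ^ T / a) := by simp only [B]; congr 1; field_simp

theorem measure_exists_heavy_finset_le_natFloor (hν0 : 0 < ν) (hν1 : ν < 1)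
    (hw : ∀ e, Measurable (w e)) (hlaw : ∀ e, HasGeometricLaw (w e) ν μ)
    {a : ℝ} (ha : 0 < a) :
    μ {ω | ¬ ∀ F : Finset ι, (F.card : ℝ) ≤ a ^ 2 * Fintype.card ι →
        ((∑ e ∈ F, w e ω : ℕ) : ℝ) ≤ a * Fintype.card ι / ν} ≤
      ENNReal.ofReal (4 * ν * (⌊(2 * a * ν)⁻¹⌋₊ + 1) * (1 - ν) ^ ⌊(2 * a * ν)⁻¹⌋₊) := by
  set x := 2 * a * ν
  have hx : 0 < x := by positivity
  set T := ⌊x⁻¹⌋₊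
  have hxT : x * T ≤ 1 := (le_div_iff₀' hx).1 (one_div x ▸ Nat.floor_le (inv_nonneg.2 hx.le))
  have hxT' : 1 < x * (T + 1) := (div_lt_iff₀' hx).1 (one_div x ▸ Nat.lt_floor_add_one x⁻¹)
  refine (measure_exists_heavy_finset_le hν0 hν1 hw hlaw ha hxT).trans
    (ENNReal.ofReal_le_ofReal ?_)
  have hqT : 0 < (1 - ν) ^ T := pow_pos (by linarith) T
  rw [div_le_iff₀ ha]
  nlinarith [mul_lt_mul_of_pos_left hxT' hqT]

end HeavySubsets

/-- Let `ν ∈ (0,1)`, let `E` be a set of size `M` whose elements independently carry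
`Geometric(ν)` weights (supported on the positive integers), and let `α = α(M) → 0`.
Then with probability `1 − o(1)` (as `M → ∞`), every subset `F` with `|F| ≤ α²M`
satisfies `Σ_{e∈F} w_e ≤ α·M/ν`. -/
theorem stmt_19 (ν : ℝ) (hν : ν ∈ Set.Ioo (0:ℝ) 1)
    (α : ℕ → ℝ) (hαpos : ∀ M, 0 < α M)
    (hα : Filter.Tendsto α Filter.atTop (nhds 0)) :
    ∀ ε : ℝ, 0 < ε → ∃ M₀ : ℕ, ∀ M : ℕ, M₀ ≤ M →
      ∀ (Ω : Type) [MeasurableSpace Ω] (μ : Measure Ω) [IsProbabilityMeasure μ]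
        (w : Fin M → Ω → ℕ),
        (∀ e, Measurable (w e)) →
        iIndepFun w μ →
        (∀ e (j : ℕ), 1 ≤ j → μ {ω | w e ω = j} =
            ENNReal.ofReal (ν * (1 - ν) ^ (j - 1))) →
        (∀ e, μ {ω | w e ω = 0} = 0) →
        μ {ω | ¬ ∀ F : Finset (Fin M), (F.card : ℝ) ≤ (α M) ^ 2 * M →
            ((∑ e ∈ F, w e ω : ℕ) : ℝ) ≤ α M * M / ν} ≤ ENNReal.ofReal ε := by
  obtain ⟨hν0, hν1⟩ := hν
  intro ε hε
  have hT : Tendsto (fun M => ⌊(2 * α M * ν)⁻¹⌋₊) atTop atTop := by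
    refine tendsto_nat_floor_atTop.comp (tendsto_inv_nhdsGT_zero.comp ?_)
    refine tendsto_nhdsWithin_iff.2 ⟨?_, Eventually.of_forall fun M => ?_⟩
    · simpa using (hα.const_mul 2).mul_const ν
    · have := hαpos M
      exact Set.mem_Ioi.2 (by positivity)
  have hlim : Tendsto (fun n : ℕ => 4 * ν * ((n : ℝ) + 1) * (1 - ν) ^ n) atTop (𝓝 0) := by
    simpa only [mul_assoc, mul_zero] using
      (tendsto_natCast_add_one_mul_pow_atTop_nhds_zero (q := 1 - ν) (by linarith)
        (by linarith)).const_mul (4 * ν)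
  obtain ⟨M₀, hM₀⟩ := eventually_atTop.1
    (((hlim.comp hT).eventually (gt_mem_nhds hε)).and (eventually_ge_atTop 1))
  refine ⟨M₀, fun M hM Ω _ μ _ w hw _ hlaw _ => ?_⟩
  obtain ⟨hsmall, hM1⟩ := hM₀ M hM
  have : Nonempty (Fin M) := ⟨⟨0, hM1⟩⟩
  simpa only [Fintype.card_fin] using (measure_exists_heavy_finset_le_natFloor hν0 hν1 hw hlaw
    (hαpos M)).trans (ENNReal.ofReal_le_ofReal hsmall.le)
end
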